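/- arXiv:1001.2163 — 5 statements merged into one kernel-verified Lean document; each statement's English description precedes it below -/
import Mathlib

section
/- Fix an integer n ≥ 1. Given a nondecreasing right-continuous ℕ-valued function E : [0,∞) → ℕ with left-hand limits, Q₀ ∈ ℕ, and sequences (ηᵢ)_{i≥1}, (η̃ᵢ)_{i≥1} of nonnegative reals, there exist functions Q : [0,∞) → ℕ and A : [0,∞) → ℕ, both right-continuous with left-hand limits and with A nondecreasing, satisfying the many-server queue equations: for all t ≥ 0, Q(t) = max(Q₀ − n, 0) + Q̃(t) + E(t) − Σ_{i=1}^{A(t)} 1{τᵢ + ηᵢ ≤ t} and A(t) = max(Q₀ − n, 0) + E(t) − max(Q(t) − n, 0), where τᵢ = inf{s ≥ 0 : A(s) ≥ i} and Q̃(t) = Σ_{i=1}^{min(Q₀,n)} 1{η̃ᵢ > t}. -/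
open Filter Set Topology

/-- A `ℕ`-valued function on `[0,∞)` that is right-continuous with left-hand limits
(with the discrete topology on `ℕ`, i.e. locally constant on the right and
eventually constant on the left). -/
def NatRCLL (g : ℝ → ℕ) : Prop :=
  (∀ t ≥ (0 : ℝ), ∀ᶠ s in nhdsWithin t (Set.Ici t), g s = g t) ∧
  (∀ t > (0 : ℝ), ∃ m : ℕ, ∀ᶠ s in nhdsWithin t (Set.Iio t), g s = m)

/-- `τᵢ = inf {s ≥ 0 : A(s) ≥ i}`. -/
noncomputable def entryTime (A : ℝ → ℕ) (i : ℕ) : ℝ :=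
  sInf {s : ℝ | 0 ≤ s ∧ i ≤ A s}

/-!
Customers are numbered in the order in which they start service: `1, …, K` with `K = (Q₀ - n)⁺`
are those waiting at time `0`, and `K + 1, K + 2, …` are the arrivals counted by `E`. The
function `R = Q̃` counts the initial customers still in service. Customer `i` enters service at
the infimum `τᵢ` of the times at which it is present and `R` together with the earlier customers
that have not yet departed (at their times `τⱼ + ηⱼ`) occupy fewer than `n` servers; this defines
`τ = entry` by strong recursion. `A(t) = entered t` is the largest customer allowed to have
entered by time `t`; this condition is downward closed in the customer and upward closed in time,
so `A` is monotone and its entry times are the `τᵢ`. Near every point, on either side, `A` and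
`Q = queueLength` are functions of `E`, `R` and finitely many indicators `1{s < c}`, all
eventually constant there, which gives the right-continuity and the left limits. The two queue
equations reduce to: at most `n` servers are busy, and either every customer present has entered
service or all `n` servers are busy.
-/

open scoped Finset

lemma Finset.card_filter_attach {α : Type*} (s : Finset α) (p : α → Prop) [DecidablePred p] :
    #{a ∈ s.attach | p a.1} = #{a ∈ s | p a} := by
  rw [Finset.filter_attach, Finset.card_map, Finset.card_attach]

namespace Filter.EventuallyConst

variable {α β γ : Type*} {l : Filter α}

lemma eval_of_forall [Nonempty β] {F : α → β → γ} {b : α → β} (hb : EventuallyConst b l)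
    (hF : ∀ m, EventuallyConst (fun a => F a m) l) :
    EventuallyConst (fun a => F a (b a)) l := by
  obtain ⟨m, hm⟩ := eventuallyConst_iff_exists_eventuallyEq.1 hb
  exact (hF m).congr (hm.mono fun a ha => congrArg (F a) ha.symm)

lemma finsetFilter {ι : Type*} {S : Finset ι} {p : α → ι → Prop} [∀ a, DecidablePred (p a)]
    (hp : ∀ i ∈ S, EventuallyConst (fun a => p a i) l) :
    EventuallyConst (fun a => S.filter (p a)) l := by
  classical
  induction S using Finset.induction_on with
  | empty => simp
  | insert i S _ ih =>
    simp only [Finset.filter_insert]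
    convert (hp i (Finset.mem_insert_self i S)).comp₂ (fun b T => if b then insert i T else T)
      (ih fun j hj => hp j (Finset.mem_insert_of_mem hj))

lemma natFindGreatest {P : α → ℕ → Prop} [∀ a, DecidablePred (P a)]
    (hP : ∀ i, EventuallyConst (fun a => P a i) l) (m : ℕ) :
    EventuallyConst (fun a => Nat.findGreatest (P a) m) l := by
  classical
  induction m with
  | zero => simp
  | succ m ih =>
    simp only [Nat.findGreatest_succ]
    convert (hP (m + 1)).comp₂ (fun b k => if b then m + 1 else k) ih

end Filter.EventuallyConst

section Thresholds

variable {α : Type*} [TopologicalSpace α] [LinearOrder α] [OrderClosedTopology α]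

lemma eventuallyConst_lt_nhdsGE (t c : α) : EventuallyConst (· < c) (𝓝[≥] t) := by
  rw [eventuallyConst_pred]
  rcases lt_or_ge t c with h | h
  · exact .inl (mem_nhdsWithin_of_mem_nhds (Iio_mem_nhds h))
  · exact .inr (eventually_nhdsWithin_of_forall fun s hs => not_lt.2 (h.trans hs))

lemma eventuallyConst_lt_nhdsLT (t c : α) : EventuallyConst (· < c) (𝓝[<] t) := by
  rw [eventuallyConst_pred]
  rcases le_or_gt t c with h | h
  · exact .inl (eventually_nhdsWithin_of_forall fun s hs => lt_of_lt_of_le hs h)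
  · refine .inr ?_
    filter_upwards [mem_nhdsWithin_of_mem_nhds (Ioi_mem_nhds h)] with s hs
    exact not_lt.2 hs.le

end Thresholds

lemma Filter.eventuallyConst_iff_eventually_eq {α β : Type*} {l : Filter α} {f : α → β} {a : α}
    (ha : pure a ≤ l) : EventuallyConst f l ↔ ∀ᶠ x in l, f x = f a := by
  have : Nonempty β := ⟨f a⟩
  refine ⟨fun h => ?_, fun h => eventuallyConst_iff_exists_eventuallyEq.2 ⟨f a, h⟩⟩
  obtain ⟨m, hm⟩ := eventuallyConst_iff_exists_eventuallyEq.1 h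
  have hma : f a = m := ha hm
  exact hm.mono fun x hx => hx.trans hma.symm

lemma natRCLL_iff_eventuallyConst {g : ℝ → ℕ} :
    NatRCLL g ↔ (∀ t ≥ (0 : ℝ), EventuallyConst g (𝓝[≥] t)) ∧
      ∀ t > (0 : ℝ), EventuallyConst g (𝓝[<] t) := by
  refine and_congr (forall₂_congr fun t _ => ?_) (forall₂_congr fun t _ => ?_)
  · exact (eventuallyConst_iff_eventually_eq (pure_le_nhdsWithin self_mem_Ici)).symm
  · exact eventuallyConst_iff_exists_eventuallyEq.symm

namespace ManyServerQueue

section Pending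

variable {ι α : Type*} [LinearOrder α]

def pending (S : Finset ι) (c : ι → α) (t : α) : ℕ := #{i ∈ S | t < c i}

variable {S T : Finset ι} {c : ι → α}

lemma pending_antitone : Antitone (pending S c) := fun _ _ hst =>
  Finset.card_le_card (Finset.monotone_filter_right _ fun _ _ h => hst.trans_lt h)

lemma pending_mono (h : S ⊆ T) (t : α) : pending S c t ≤ pending T c t :=
  Finset.card_le_card (Finset.filter_subset_filter _ h)

lemma pending_le_card (t : α) : pending S c t ≤ #S := Finset.card_filter_le _ _

lemma pending_insert_le [DecidableEq ι] (i : ι) (t : α) :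
    pending (insert i S) c t ≤ pending S c t + 1 := by
  unfold pending
  rw [Finset.filter_insert]
  split_ifs
  exacts [Finset.card_insert_le _ _, Nat.le_succ _]

lemma eventuallyConst_pending {l : Filter α} (hl : ∀ i ∈ S, EventuallyConst (· < c i) l) :
    EventuallyConst (pending S c) l :=
  (EventuallyConst.finsetFilter hl).comp Finset.card

end Pending

variable (n K : ℕ) (E R : ℝ → ℕ) (η : ℕ → ℝ)

noncomputable def entry (i : ℕ) : ℝ :=
  sInf {s | 0 ≤ s ∧ i ≤ K + E s ∧
    R s + #{j ∈ (Finset.Ico 1 i).attach | s < entry j.1 + η j.1} < n}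
termination_by i
decreasing_by all_goals exact (Finset.mem_Ico.1 (Subtype.prop _)).2

noncomputable def departure (i : ℕ) : ℝ := entry n K E R η i + η i

def CanEnter (i : ℕ) (t : ℝ) : Prop :=
  0 ≤ t ∧ i ≤ K + E t ∧ R t + pending (Finset.Ico 1 i) (departure n K E R η) t < n

open scoped Classical in
noncomputable def entered (t : ℝ) : ℕ := Nat.findGreatest (CanEnter n K E R η · t) (K + E t)

noncomputable def departed (t : ℝ) : ℕ :=
  #{i ∈ Finset.Icc 1 (entered n K E R η t) | departure n K E R η i ≤ t}

noncomputable def inService (t : ℝ) : ℕ :=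
  R t + pending (Finset.Icc 1 (entered n K E R η t)) (departure n K E R η) t

noncomputable def queueLength (t : ℝ) : ℕ := K + R t + E t - departed n K E R η t

variable {n K E R η}

lemma entry_eq (i : ℕ) : entry n K E R η i = sInf {s | CanEnter n K E R η i s} := by
  rw [entry]
  congr 1
  ext s
  rw [Set.mem_ofPred_eq,
    Finset.card_filter_attach (Finset.Ico 1 i) (fun j => s < entry n K E R η j + η j)]
  rfl

lemma CanEnter.of_le {i j : ℕ} {t : ℝ} (h : CanEnter n K E R η i t) (hji : j ≤ i) :
    CanEnter n K E R η j t :=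
  ⟨h.1, hji.trans h.2.1,
    (Nat.add_le_add_left (pending_mono (Finset.Ico_subset_Ico_right hji) t) _).trans_lt h.2.2⟩

lemma CanEnter.mono (hE : MonotoneOn E (Ici 0)) (hR : Antitone R) {i : ℕ} {t t' : ℝ}
    (h : CanEnter n K E R η i t) (htt' : t ≤ t') : CanEnter n K E R η i t' := by
  obtain ⟨ht, hi, hfree⟩ := h
  have ht' : 0 ≤ t' := ht.trans htt'
  refine ⟨ht', hi.trans (Nat.add_le_add_left (hE ht ht' htt') K), ?_⟩
  exact (Nat.add_le_add (hR htt') (pending_antitone htt')).trans_lt hfree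

lemma entered_le (t : ℝ) : entered n K E R η t ≤ K + E t := by
  classical
  exact Nat.findGreatest_le _

lemma canEnter_iff_le_entered {i : ℕ} {t : ℝ} (hi : 1 ≤ i) :
    CanEnter n K E R η i t ↔ i ≤ entered n K E R η t := by
  classical
  refine ⟨fun h => Nat.le_findGreatest h.2.1 h, fun h => ?_⟩
  have hne : entered n K E R η t ≠ 0 := by omega
  exact CanEnter.of_le (Nat.findGreatest_of_ne_zero rfl hne) h

lemma monotoneOn_entered (hE : MonotoneOn E (Ici 0)) (hR : Antitone R) :
    MonotoneOn (entered n K E R η) (Ici 0) := by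
  intro s _ t _ hst
  rcases Nat.eq_zero_or_pos (entered n K E R η s) with h | h
  · exact h ▸ Nat.zero_le _
  · exact (canEnter_iff_le_entered h).1 (((canEnter_iff_le_entered h).2 le_rfl).mono hE hR hst)

lemma entryTime_entered {i : ℕ} (hi : 1 ≤ i) :
    entryTime (entered n K E R η) i = entry n K E R η i := by
  rw [entryTime, entry_eq]
  congr 1
  ext s
  exact ⟨fun ⟨hs, h⟩ => (canEnter_iff_le_entered hi).2 h,
    fun h => ⟨h.1, (canEnter_iff_le_entered hi).1 h⟩⟩

lemma departed_eq (t : ℝ) : departed n K E R η t =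
    #{i ∈ Finset.Icc 1 (entered n K E R η t) | entryTime (entered n K E R η) i + η i ≤ t} := by
  refine congrArg Finset.card (Finset.filter_congr fun i hi => ?_)
  rw [entryTime_entered (Finset.mem_Icc.1 hi).1, departure]

section EventuallyConst

variable {l : Filter ℝ} (hl : ∀ c : ℝ, EventuallyConst (· < c) l)
  (hE : EventuallyConst E l) (hR : EventuallyConst R l)
include hl hE hR

lemma eventuallyConst_canEnter (i : ℕ) : EventuallyConst (CanEnter n K E R η i) l := by
  have h0 : EventuallyConst (fun t : ℝ => 0 ≤ t) l := by
    simpa only [Function.comp_def, not_lt] using (hl 0).comp Not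
  have hfree := (hR.add (eventuallyConst_pending (c := departure n K E R η)
    (S := Finset.Ico 1 i) fun j _ => hl _)).comp (· < n)
  exact h0.comp₂ And ((hE.comp (i ≤ K + ·)).comp₂ And hfree)

lemma eventuallyConst_entered : EventuallyConst (entered n K E R η) l := by
  classical
  exact (hE.comp (K + ·)).eval_of_forall
    (F := fun t m => Nat.findGreatest (CanEnter n K E R η · t) m)
    (.natFindGreatest (eventuallyConst_canEnter hl hE hR))

lemma eventuallyConst_departed : EventuallyConst (departed n K E R η) l := by
  refine (eventuallyConst_entered hl hE hR).eval_of_forall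
    (F := fun t m => #{i ∈ Finset.Icc 1 m | departure n K E R η i ≤ t}) fun m => ?_
  refine (EventuallyConst.finsetFilter fun i _ => ?_).comp Finset.card
  simpa only [Function.comp_def, not_lt] using (hl (departure n K E R η i)).comp Not

lemma eventuallyConst_queueLength : EventuallyConst (queueLength n K E R η) l :=
  ((hR.comp (K + ·)).add hE).comp₂ (· - ·) (eventuallyConst_departed hl hE hR)

end EventuallyConst

lemma natRCLL_of_eventuallyConst {g : ℝ → ℕ} (hE : NatRCLL E) (hR : NatRCLL R)
    (hg : ∀ l : Filter ℝ, (∀ c : ℝ, EventuallyConst (· < c) l) →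
      EventuallyConst E l → EventuallyConst R l → EventuallyConst g l) : NatRCLL g := by
  rw [natRCLL_iff_eventuallyConst] at hE hR ⊢
  exact ⟨fun t ht => hg _ (eventuallyConst_lt_nhdsGE t) (hE.1 t ht) (hR.1 t ht),
    fun t ht => hg _ (eventuallyConst_lt_nhdsLT t) (hE.2 t ht) (hR.2 t ht)⟩

lemma natRCLL_pending {ι : Type*} (S : Finset ι) (c : ι → ℝ) : NatRCLL (pending S c) := by
  rw [natRCLL_iff_eventuallyConst]
  exact ⟨fun t _ => eventuallyConst_pending fun i _ => eventuallyConst_lt_nhdsGE t (c i),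
    fun t _ => eventuallyConst_pending fun i _ => eventuallyConst_lt_nhdsLT t (c i)⟩

lemma departed_add_pending (t : ℝ) :
    departed n K E R η t + pending (Finset.Icc 1 (entered n K E R η t)) (departure n K E R η) t =
      entered n K E R η t := by
  unfold departed pending
  simp only [← not_le]
  rw [Finset.card_filter_add_card_filter_not, Nat.card_Icc, Nat.add_sub_cancel]

lemma departed_le_entered (t : ℝ) : departed n K E R η t ≤ entered n K E R η t :=
  (departed_add_pending t).symm ▸ Nat.le_add_right _ _

lemma inService_le {t : ℝ} (hRn : R t ≤ n) : inService n K E R η t ≤ n := by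
  unfold inService
  rcases Nat.eq_zero_or_pos (entered n K E R η t) with h | h
  · simpa [h, pending] using hRn
  · have hfree := ((canEnter_iff_le_entered h).2 le_rfl).2.2
    have := pending_insert_le (S := Finset.Ico 1 (entered n K E R η t)) (c := departure n K E R η)
      (entered n K E R η t) t
    rw [Finset.Ico_insert_right h] at this
    omega

lemma le_inService {t : ℝ} (ht : 0 ≤ t) (hlt : entered n K E R η t < K + E t) :
    n ≤ inService n K E R η t := by
  unfold inService
  by_contra! hfree
  have hcan : CanEnter n K E R η (entered n K E R η t + 1) t :=
    ⟨ht, hlt, by rwa [Finset.Ico_add_one_right_eq_Icc]⟩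
  have := (canEnter_iff_le_entered (Nat.le_add_left 1 _)).1 hcan
  omega

lemma queueLength_cast (t : ℝ) :
    (queueLength n K E R η t : ℤ) = K + R t + E t - departed n K E R η t := by
  have := (@departed_le_entered n K E R η t).trans (entered_le t)
  unfold queueLength
  push_cast [show departed n K E R η t ≤ K + R t + E t by omega]
  ring

lemma entered_cast {t : ℝ} (ht : 0 ≤ t) (hRn : R t ≤ n) :
    (entered n K E R η t : ℤ) = K + E t - max ((queueLength n K E R η t : ℤ) - n) 0 := by
  have hsplit := @departed_add_pending n K E R η t
  have hcapacity := @inService_le n K E R η t hRn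
  have hworkConserving := @le_inService n K E R η t ht
  unfold inService at hcapacity hworkConserving
  have hle := @entered_le n K E R η t
  rw [queueLength_cast]
  omega

end ManyServerQueue

open ManyServerQueue

theorem manyServerQueue_equations_exist_general
    (n : ℕ)
    (E : ℝ → ℕ) (hEmono : MonotoneOn E (Set.Ici 0)) (hErcll : NatRCLL E)
    (Q₀ : ℕ) (η η' : ℕ → ℝ) :
    ∃ Q A : ℝ → ℕ,
      NatRCLL Q ∧ NatRCLL A ∧ MonotoneOn A (Set.Ici 0) ∧
      ∀ t ≥ (0 : ℝ),
        ((Q t : ℤ) =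
            max ((Q₀ : ℤ) - n) 0
              + (∑ i ∈ Finset.Icc 1 (min Q₀ n), if t < η' i then (1 : ℤ) else 0)
              + (E t : ℤ)
              - ∑ i ∈ Finset.Icc 1 (A t),
                  (if entryTime A i + η i ≤ t then (1 : ℤ) else 0)) ∧
        ((A t : ℤ) = max ((Q₀ : ℤ) - n) 0 + (E t : ℤ) - max ((Q t : ℤ) - n) 0) := by
  set R := pending (Finset.Icc 1 (min Q₀ n)) η'
  have hR : NatRCLL R := natRCLL_pending _ _
  have hRn (t : ℝ) : R t ≤ n := (pending_le_card t).trans (by simp)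
  have hK : max ((Q₀ : ℤ) - n) 0 = ((Q₀ - n : ℕ) : ℤ) := by omega
  refine ⟨queueLength n (Q₀ - n) E R η, entered n (Q₀ - n) E R η,
    natRCLL_of_eventuallyConst hErcll hR fun _ hl hEl hRl => eventuallyConst_queueLength hl hEl hRl,
    natRCLL_of_eventuallyConst hErcll hR fun _ hl hEl hRl => eventuallyConst_entered hl hEl hRl,
    monotoneOn_entered hEmono pending_antitone, fun t ht => ⟨?_, ?_⟩⟩
  · rw [queueLength_cast, hK, Finset.sum_boole, Finset.sum_boole, departed_eq]
    rfl
  · rw [entered_cast ht (hRn t), hK]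

/-- Existence of solutions to the many-server queue equations (Lemma A.1, existence part). -/
theorem manyServerQueue_equations_exist
    (n : ℕ) (hn : 1 ≤ n)
    (E : ℝ → ℕ) (hEmono : MonotoneOn E (Set.Ici 0)) (hErcll : NatRCLL E)
    (Q₀ : ℕ) (η η' : ℕ → ℝ)
    (hη : ∀ i, 1 ≤ i → 0 ≤ η i) (hη' : ∀ i, 1 ≤ i → 0 ≤ η' i) :
    ∃ Q A : ℝ → ℕ,
      NatRCLL Q ∧ NatRCLL A ∧ MonotoneOn A (Set.Ici 0) ∧
      ∀ t ≥ (0 : ℝ),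
        ((Q t : ℤ) =
            max ((Q₀ : ℤ) - n) 0
              + (∑ i ∈ Finset.Icc 1 (min Q₀ n), if t < η' i then (1 : ℤ) else 0)
              + (E t : ℤ)
              - ∑ i ∈ Finset.Icc 1 (A t),
                  (if entryTime A i + η i ≤ t then (1 : ℤ) else 0)) ∧
        ((A t : ℤ) = max ((Q₀ : ℤ) - n) 0 + (E t : ℤ) - max ((Q t : ℤ) - n) 0) :=
  manyServerQueue_equations_exist_general n E hEmono hErcll Q₀ η η'
end

section
/- Fix an integer n ≥ 1. Given a nondecreasing right-continuous ℕ-valued function E : [0,∞) → ℕ with left-hand limits, Q₀ ∈ ℕ, and sequences (ηᵢ)_{i≥1}, (η̃ᵢ)_{i≥1} of nonnegative reals such that ηᵢ > 0 for every i ≥ 1, there is at most one pair of functions Q : [0,∞) → ℕ and A : [0,∞) → ℕ, both right-continuous with left-hand limits and with A nondecreasing, satisfying for all t ≥ 0: Q(t) = max(Q₀ − n, 0) + Q̃(t) + E(t) − Σ_{i=1}^{A(t)} 1{τᵢ + ηᵢ ≤ t} and A(t) = max(Q₀ − n, 0) + E(t) − max(Q(t) − n, 0), where τᵢ = inf{s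 ≥ 0 : A(s) ≥ i} and Q̃(t) = Σ_{i=1}^{min(Q₀,n)} 1{η̃ᵢ > t}. -/
open Filter Set Topology

/-- `(Q, A)` solves the many-server queue equations on `[0,∞)`. -/
def SolvesQueue (n : ℕ) (E : ℝ → ℕ) (Q₀ : ℕ) (η η' : ℕ → ℝ) (Q A : ℝ → ℕ) : Prop :=
  NatRCLL Q ∧ NatRCLL A ∧ MonotoneOn A (Set.Ici 0) ∧
  ∀ t ≥ (0 : ℝ),
    ((Q t : ℤ) =
        max ((Q₀ : ℤ) - n) 0
          + (∑ i ∈ Finset.Icc 1 (min Q₀ n), if t < η' i then (1 : ℤ) else 0)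
          + (E t : ℤ)
          - ∑ i ∈ Finset.Icc 1 (A t),
              (if entryTime A i + η i ≤ t then (1 : ℤ) else 0)) ∧
    ((A t : ℤ) = max ((Q₀ : ℤ) - n) 0 + (E t : ℤ) - max ((Q t : ℤ) - n) 0)

/-
Suppose two solutions first disagree at time `T`. Since service times are positive, every
customer counted as departed by time `T` entered service strictly before `T`, where the two
service-entry processes `A` agree; hence so do the entry times and the departure counts at `T`.
The queue equations then force `Q` and `A` to agree at `T`, and right-continuity keeps them
equal on some `[T, T + ε)`, contradicting the choice of `T`.
-/

lemma entryTime_eq_of_eqOn_Iio {A₁ A₂ : ℝ → ℕ} {t s₀ : ℝ} {i : ℕ}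
    (hA : ∀ s, 0 ≤ s → s < t → A₁ s = A₂ s) (hs₀ : 0 ≤ s₀) (hs₀t : s₀ < t) (hi : i ≤ A₁ s₀) :
    entryTime A₁ i = entryTime A₂ i := by
  refine csInf_eq_csInf_of_forall_exists_le ?_ ?_
  · rintro x ⟨hx, hix⟩
    rcases lt_or_ge x t with hxt | htx
    · exact ⟨x, ⟨hx, hA x hx hxt ▸ hix⟩, le_rfl⟩
    · exact ⟨s₀, ⟨hs₀, hA s₀ hs₀ hs₀t ▸ hi⟩, by linarith⟩
  · rintro x ⟨hx, hix⟩
    rcases lt_or_ge x t with hxt | htx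
    · exact ⟨x, ⟨hx, (hA x hx hxt).symm ▸ hix⟩, le_rfl⟩
    · exact ⟨s₀, ⟨hs₀, hi⟩, by linarith⟩

lemma exists_le_lt_of_entryTime_lt {A : ℝ → ℕ} {i : ℕ} {t : ℝ} (ht : 0 ≤ t) (hi : i ≤ A t)
    (hτ : entryTime A i < t) : ∃ s, 0 ≤ s ∧ s < t ∧ i ≤ A s := by
  have hne : {s : ℝ | 0 ≤ s ∧ i ≤ A s}.Nonempty := ⟨t, ht, hi⟩
  obtain ⟨s, ⟨hs, his⟩, hst⟩ := exists_lt_of_csInf_lt hne hτ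
  exact ⟨s, hs, hst, his⟩

-- A positive service time `d` forces customer `i` to have entered strictly before `t`,
-- where `A₁` and `A₂` agree.
lemma departed_of_eqOn_Iio {A₁ A₂ : ℝ → ℕ} {t d : ℝ} {i : ℕ} (ht : 0 ≤ t) (hd : 0 < d)
    (hA₂ : MonotoneOn A₂ (Ici 0)) (hA : ∀ s, 0 ≤ s → s < t → A₁ s = A₂ s)
    (hi : i ≤ A₁ t) (hdep : entryTime A₁ i + d ≤ t) :
    i ≤ A₂ t ∧ entryTime A₂ i + d ≤ t := by
  obtain ⟨s, hs, hst, his⟩ := exists_le_lt_of_entryTime_lt ht hi (by linarith)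
  rw [← entryTime_eq_of_eqOn_Iio hA hs hst his]
  exact ⟨(hA s hs hst ▸ his).trans (hA₂ hs ht hst.le), hdep⟩

lemma departures_eq_of_eqOn_Iio {A₁ A₂ : ℝ → ℕ} {η : ℕ → ℝ} {t : ℝ} (ht : 0 ≤ t)
    (hη : ∀ i, 1 ≤ i → 0 < η i) (hA₁ : MonotoneOn A₁ (Ici 0)) (hA₂ : MonotoneOn A₂ (Ici 0))
    (hA : ∀ s, 0 ≤ s → s < t → A₁ s = A₂ s) :
    ∑ i ∈ Finset.Icc 1 (A₁ t), (if entryTime A₁ i + η i ≤ t then (1 : ℤ) else 0)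
      = ∑ i ∈ Finset.Icc 1 (A₂ t), (if entryTime A₂ i + η i ≤ t then (1 : ℤ) else 0) := by
  have hA' : ∀ s, 0 ≤ s → s < t → A₂ s = A₁ s := fun s hs hst => (hA s hs hst).symm
  rw [Finset.sum_boole, Finset.sum_boole]
  congr 2
  ext i
  simp only [Finset.mem_filter, Finset.mem_Icc]
  constructor
  · rintro ⟨⟨h1, hi⟩, hdep⟩
    exact and_assoc.2 ⟨h1, departed_of_eqOn_Iio ht (hη i h1) hA₂ hA hi hdep⟩
  · rintro ⟨⟨h1, hi⟩, hdep⟩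
    exact and_assoc.2 ⟨h1, departed_of_eqOn_Iio ht (hη i h1) hA₁ hA' hi hdep⟩

lemma forall_ge_zero_of_nhdsGE_induction {P : ℝ → Prop}
    (h : ∀ T ≥ 0, (∀ s, 0 ≤ s → s < T → P s) → ∀ᶠ s in 𝓝[≥] T, P s) :
    ∀ t ≥ 0, P t := by
  by_contra! hbad
  set B := {t : ℝ | 0 ≤ t ∧ ¬P t}
  have hB : B.Nonempty := hbad
  have hBbdd : BddBelow B := ⟨0, fun _ hx => hx.1⟩
  have hT : 0 ≤ sInf B := le_csInf hB fun _ hx => hx.1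
  have hbelow : ∀ s, 0 ≤ s → s < sInf B → P s := fun s hs hsT =>
    by_contra fun hPs => (csInf_le hBbdd ⟨hs, hPs⟩).not_gt hsT
  obtain ⟨u, hTu, hu⟩ := mem_nhdsGE_iff_exists_Ico_subset.1 (h _ hT hbelow)
  refine (le_csInf hB fun x ⟨hx, hPx⟩ => ?_).not_gt hTu
  by_contra! hxu
  rcases lt_or_ge x (sInf B) with hxT | hTx
  · exact hPx (hbelow x hx hxT)
  · exact hPx (hu ⟨hTx, hxu⟩)

lemma SolvesQueue.eq_of_eqOn_Iio {n : ℕ} {E : ℝ → ℕ} {Q₀ : ℕ} {η η' : ℕ → ℝ}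
    {Q₁ A₁ Q₂ A₂ : ℝ → ℕ} (h₁ : SolvesQueue n E Q₀ η η' Q₁ A₁)
    (h₂ : SolvesQueue n E Q₀ η η' Q₂ A₂) (hη : ∀ i, 1 ≤ i → 0 < η i) {t : ℝ} (ht : 0 ≤ t)
    (hA : ∀ s, 0 ≤ s → s < t → A₁ s = A₂ s) :
    Q₁ t = Q₂ t ∧ A₁ t = A₂ t := by
  have hQ : Q₁ t = Q₂ t := by
    have hdep := departures_eq_of_eqOn_Iio ht hη h₁.2.2.1 h₂.2.2.1 hA
    have hQℤ : (Q₁ t : ℤ) = Q₂ t := by rw [(h₁.2.2.2 t ht).1, (h₂.2.2.2 t ht).1, hdep]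
    exact_mod_cast hQℤ
  refine ⟨hQ, ?_⟩
  have hAℤ : (A₁ t : ℤ) = A₂ t := by rw [(h₁.2.2.2 t ht).2, (h₂.2.2.2 t ht).2, hQ]
  exact_mod_cast hAℤ

theorem manyServerQueue_equations_unique_general
    (n : ℕ)
    (E : ℝ → ℕ)
    (Q₀ : ℕ) (η η' : ℕ → ℝ)
    (hη : ∀ i, 1 ≤ i → 0 < η i)
    (Q₁ A₁ Q₂ A₂ : ℝ → ℕ)
    (h₁ : SolvesQueue n E Q₀ η η' Q₁ A₁) (h₂ : SolvesQueue n E Q₀ η η' Q₂ A₂) :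
    ∀ t ≥ (0 : ℝ), Q₁ t = Q₂ t ∧ A₁ t = A₂ t := by
  refine forall_ge_zero_of_nhdsGE_induction fun T hT hbelow => ?_
  obtain ⟨hQT, hAT⟩ := h₁.eq_of_eqOn_Iio h₂ hη hT fun s hs hsT => (hbelow s hs hsT).2
  filter_upwards [h₁.1.1 T hT, h₂.1.1 T hT, h₁.2.1.1 T hT, h₂.2.1.1 T hT]
    with s hQ₁ hQ₂ hA₁ hA₂
  exact ⟨by rw [hQ₁, hQ₂, hQT], by rw [hA₁, hA₂, hAT]⟩

/-- Uniqueness of solutions to the many-server queue equations when all service times are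
positive (Lemma A.1, uniqueness part). -/
theorem manyServerQueue_equations_unique
    (n : ℕ) (hn : 1 ≤ n)
    (E : ℝ → ℕ) (hEmono : MonotoneOn E (Set.Ici 0)) (hErcll : NatRCLL E)
    (Q₀ : ℕ) (η η' : ℕ → ℝ)
    (hη : ∀ i, 1 ≤ i → 0 < η i) (hη' : ∀ i, 1 ≤ i → 0 ≤ η' i)
    (Q₁ A₁ Q₂ A₂ : ℝ → ℕ)
    (h₁ : SolvesQueue n E Q₀ η η' Q₁ A₁) (h₂ : SolvesQueue n E Q₀ η η' Q₂ A₂) :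
    ∀ t ≥ (0 : ℝ), Q₁ t = Q₂ t ∧ A₁ t = A₂ t :=
  manyServerQueue_equations_unique_general n E Q₀ η η' hη Q₁ A₁ Q₂ A₂ h₁ h₂
end

section
/- Let B be a distribution function of a nonnegative random variable with B(0) < 1, let T > 0, let x : [0,T] → ℝ be a bounded Borel function, and let f : ℝ × [0,∞) → ℝ be a Borel function satisfying |f(y,t)| ≤ |y| and |f(y₁,t) − f(y₂,t)| ≤ |y₁ − y₂| for all y, y₁, y₂ ∈ ℝ and t ≥ 0. Then there exists a unique bounded Borel function y : [0,T] → ℝ such that y(t) = x(t) + ∫₀ᵗ f(y(t−s), t−s) dB(s) for all t ∈ [0,T]. -/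
/-! Weight the unknown by `e^{-λt}`. By dominated convergence `∫_{[0,T]} e^{-λs} dB(s) → B(0) < 1`
as `λ → ∞`, so for large `λ` the Picard map `y ↦ x + ∫₀ᵗ f(y(t-s), t-s) dB(s)` is a contraction
for the weighted norm `sup_{[0,T]} e^{-λt} |y(t)|`, because `f` is `1`-Lipschitz in `y`. After the
substitution `z(t) = e^{-λt} y(t)` this is Banach's fixed point theorem in `ℓ^∞([0,T], ℝ)`, applied
on the closed subset of measurable functions. -/

open MeasureTheory Filter Set Topology

/-- `B` is the distribution function of a nonnegative random variable:
it vanishes on the negatives and tends to `1` at infinity.  (As a `StieltjesFunction`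
it is already nondecreasing and right-continuous; its Lebesgue–Stieltjes measure
`B.measure` assigns mass `B 0` to `{0}` and mass `B b - B a` to `(a, b]`.) -/
def IsNNDistFun (B : StieltjesFunction ℝ) : Prop :=
  (∀ x < (0 : ℝ), B x = 0) ∧ Tendsto B atTop (nhds 1)

/-- `y` is a bounded Borel solution on `[0,T]` of the convolution equation
`y(t) = x(t) + ∫₀ᵗ f(y(t-s), t-s) dB(s)`. -/
def SolvesConv (B : StieltjesFunction ℝ) (T : ℝ) (x : ℝ → ℝ) (f : ℝ → ℝ → ℝ)
    (y : ℝ → ℝ) : Prop :=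
  Measurable (fun t : Set.Icc (0 : ℝ) T => y t) ∧
  (∃ C : ℝ, ∀ t ∈ Set.Icc (0 : ℝ) T, |y t| ≤ C) ∧
  ∀ t ∈ Set.Icc (0 : ℝ) T,
    y t = x t + ∫ s in Set.Icc (0 : ℝ) t, f (y (t - s)) (t - s) ∂B.measure

open Real
open scoped NNReal ENNReal lp

theorem isClosed_setOf_measurable_lp {ι : Type*} [MeasurableSpace ι] {p : ℝ≥0∞} [Fact (1 ≤ p)] :
    IsClosed {z : lp (fun _ : ι => ℝ) p | Measurable (z : ι → ℝ)} :=
  IsSeqClosed.isClosed fun _ z hzs hlim => measurable_of_tendsto_metrizable hzs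
    ((lp.uniformContinuous_coe.continuous.tendsto z).comp hlim)

theorem existsUnique_bdd_measurable_fixedPoint {ι : Type*} [MeasurableSpace ι]
    {Ψ : (ι → ℝ) → ι → ℝ} {q : ℝ} (hq0 : 0 ≤ q) (hq1 : q < 1)
    (hbdd : ∀ z C, 0 ≤ C → (∀ i, |z i| ≤ C) → ∃ C', ∀ i, |Ψ z i| ≤ C')
    (hmeas : ∀ z, Measurable z → Measurable (Ψ z))
    (hlip : ∀ z₁ z₂ C, Measurable z₁ → Measurable z₂ → (∀ i, |z₁ i| ≤ C) → (∀ i, |z₂ i| ≤ C) →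
      ∀ D, 0 ≤ D → (∀ i, |z₁ i - z₂ i| ≤ D) → ∀ i, |Ψ z₁ i - Ψ z₂ i| ≤ D * q) :
    ∃! z, (Measurable z ∧ ∃ C, ∀ i, |z i| ≤ C) ∧ Ψ z = z := by
  have bound (z : ℓ^∞(ι, ℝ)) (i : ι) : |z i| ≤ ‖z‖ :=
    lp.norm_apply_le_norm ENNReal.top_ne_zero z i
  let lift (z : ι → ℝ) (hz : ∃ C, ∀ i, |z i| ≤ C) : ℓ^∞(ι, ℝ) :=
    ⟨z, memℓp_infty (hz.imp fun C hC => by rintro _ ⟨i, rfl⟩; exact hC i)⟩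
  let Ψ' (z : ℓ^∞(ι, ℝ)) : ℓ^∞(ι, ℝ) := lift (Ψ z) (hbdd z _ (norm_nonneg z) (bound z))
  let s : Set ℓ^∞(ι, ℝ) := {z | Measurable (z : ι → ℝ)}
  have hΨs : MapsTo Ψ' s s := fun z hz => hmeas z hz
  have hΨ : ContractingWith q.toNNReal (hΨs.restrict Ψ' s s) := by
    refine ⟨by simpa using hq1, LipschitzWith.of_dist_le_mul fun z₁ z₂ => ?_⟩
    rw [Real.coe_toNNReal q hq0, Subtype.dist_eq, Subtype.dist_eq, dist_eq_norm, dist_eq_norm,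
      mul_comm]
    refine lp.norm_le_of_forall_le (by positivity) fun i => ?_
    refine hlip _ _ (max ‖(z₁ : ℓ^∞(ι, ℝ))‖ ‖(z₂ : ℓ^∞(ι, ℝ))‖) z₁.2 z₂.2
      (fun i => (bound _ i).trans (le_max_left _ _))
      (fun i => (bound _ i).trans (le_max_right _ _)) _ (norm_nonneg _) (fun i => ?_) i
    simpa using bound ((z₁ : ℓ^∞(ι, ℝ)) - z₂) i
  have h0 : (0 : ℓ^∞(ι, ℝ)) ∈ s := by
    simp only [s, mem_ofPred_eq, lp.coeFn_zero]
    exact measurable_zero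
  obtain ⟨z, hzs, hz, -⟩ := hΨ.exists_fixedPoint' isClosed_setOf_measurable_lp.isComplete hΨs h0
    (edist_ne_top _ _)
  refine ⟨z, ⟨⟨hzs, _, bound z⟩, congrArg (⇑) hz⟩, ?_⟩
  rintro w ⟨⟨hwm, hwb⟩, hw⟩
  have hw' : Function.IsFixedPt Ψ' (lift w hwb) := lp.ext hw
  have := hΨ.fixedPoint_unique' (x := ⟨lift w hwb, hwm⟩) (y := ⟨z, hzs⟩)
    (Subtype.ext hw') (Subtype.ext hz)
  exact congrArg (fun v : s => ⇑(v : ℓ^∞(ι, ℝ))) this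

noncomputable def causalConv (μ : Measure ℝ) (g : ℝ → ℝ) (t : ℝ) : ℝ :=
  ∫ s in Icc 0 t, g (t - s) ∂μ

section CausalConv

variable {μ : Measure ℝ} {g g₁ g₂ : ℝ → ℝ} {t : ℝ}

theorem measurable_causalConv [SFinite μ] (hg : Measurable g) : Measurable (causalConv μ g) := by
  have hK : StronglyMeasurable fun p : ℝ × ℝ =>
      {p : ℝ × ℝ | 0 ≤ p.2 ∧ p.2 ≤ p.1}.indicator (fun p => g (p.1 - p.2)) p :=
    ((hg.comp (measurable_fst.sub measurable_snd)).indicator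
      ((measurableSet_le measurable_const measurable_snd).inter
        (measurableSet_le measurable_snd measurable_fst))).stronglyMeasurable
  convert (hK.integral_prod_right' (ν := μ)).measurable using 2 with t
  rw [causalConv, ← integral_indicator measurableSet_Icc]
  rfl

theorem causalConv_congr (h : EqOn g₁ g₂ (Icc 0 t)) : causalConv μ g₁ t = causalConv μ g₂ t :=
  setIntegral_congr_fun measurableSet_Icc fun _ hs => h (sub_mem_Icc_zero_iff_right.2 hs)

variable [IsLocallyFiniteMeasure μ] {lam D q : ℝ}

theorem integrableOn_comp_sub_of_abs_le (hg : Measurable g)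
    (hbd : ∀ u ∈ Icc 0 t, |g u| ≤ D * exp (lam * u)) :
    IntegrableOn (fun s => g (t - s)) (Icc 0 t) μ :=
  (by fun_prop : Continuous fun s => D * exp (lam * (t - s))).integrableOn_Icc.mono'
    (hg.comp (measurable_const.sub measurable_id)).aestronglyMeasurable
    (ae_restrict_of_forall_mem measurableSet_Icc fun _ hs =>
      hbd _ (sub_mem_Icc_zero_iff_right.2 hs))

theorem causalConv_sub (hg₁ : Measurable g₁) (hg₂ : Measurable g₂)
    (hbd₁ : ∀ u ∈ Icc 0 t, |g₁ u| ≤ D * exp (lam * u))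
    (hbd₂ : ∀ u ∈ Icc 0 t, |g₂ u| ≤ D * exp (lam * u)) :
    causalConv μ g₁ t - causalConv μ g₂ t = causalConv μ (g₁ - g₂) t :=
  (integral_sub (integrableOn_comp_sub_of_abs_le hg₁ hbd₁)
    (integrableOn_comp_sub_of_abs_le hg₂ hbd₂)).symm

theorem abs_exp_mul_causalConv_le (hD : 0 ≤ D) (hq : ∫ s in Icc 0 t, exp (-(lam * s)) ∂μ ≤ q)
    (hbd : ∀ u ∈ Icc 0 t, |g u| ≤ D * exp (lam * u)) :
    |exp (-(lam * t)) * causalConv μ g t| ≤ D * q :=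
  calc |exp (-(lam * t)) * causalConv μ g t|
      ≤ exp (-(lam * t)) * ∫ s in Icc 0 t, D * exp (lam * (t - s)) ∂μ := by
        rw [abs_mul, abs_exp, ← Real.norm_eq_abs]
        gcongr
        exact norm_integral_le_of_norm_le
          (by fun_prop : Continuous fun s => D * exp (lam * (t - s))).integrableOn_Icc
          (ae_restrict_of_forall_mem measurableSet_Icc fun _ hs =>
            hbd _ (sub_mem_Icc_zero_iff_right.2 hs))
    _ = D * ∫ s in Icc 0 t, exp (-(lam * s)) ∂μ := by
        rw [← integral_const_mul, ← integral_const_mul]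
        congr with s
        rw [mul_left_comm, ← exp_add]
        ring_nf
    _ ≤ D * q := by gcongr

end CausalConv

theorem tendsto_setIntegral_Icc_exp_neg_mul {μ : Measure ℝ} [IsLocallyFiniteMeasure μ] {T : ℝ}
    (hT : 0 ≤ T) :
    Tendsto (fun lam => ∫ s in Icc 0 T, exp (-(lam * s)) ∂μ) atTop (𝓝 (μ.real {0})) := by
  have hlim : ∀ s ∈ Icc 0 T,
      Tendsto (fun lam => exp (-(lam * s))) atTop (𝓝 (({0} : Set ℝ).indicator 1 s)) := by
    intro s hs
    rcases hs.1.eq_or_lt with rfl | hs0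
    · simp
    · rw [indicator_of_notMem (by simpa using hs0.ne')]
      exact tendsto_exp_atBot.comp
        (tendsto_neg_atTop_atBot.comp (tendsto_id.atTop_mul_const hs0))
  have : IsFiniteMeasure (μ.restrict (Icc 0 T)) :=
    isFiniteMeasure_restrict.2 isCompact_Icc.measure_lt_top.ne
  have := tendsto_integral_filter_of_dominated_convergence (μ := μ.restrict (Icc 0 T))
    (fun _ => 1)
    (Eventually.of_forall fun lam =>
      (by fun_prop : Continuous fun s => exp (-(lam * s))).aestronglyMeasurable)
    ((eventually_ge_atTop 0).mono fun lam hlam => ae_restrict_of_forall_mem measurableSet_Icc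
      fun s hs => by
        rw [norm_of_nonneg (exp_pos _).le, exp_le_one_iff, neg_nonpos]
        exact mul_nonneg hlam hs.1)
    (integrable_const 1)
    (ae_restrict_of_forall_mem measurableSet_Icc hlim)
  rwa [integral_indicator_one (measurableSet_singleton 0),
    measureReal_restrict_apply (measurableSet_singleton 0),
    inter_eq_left.2 (singleton_subset_iff.2 (left_mem_Icc.2 hT))] at this

theorem StieltjesFunction.measureReal_singleton_zero (B : StieltjesFunction ℝ)
    (hB : ∀ x < 0, B x = 0) :
    B.measure.real {0} = B 0 := by
  have hleft : Function.leftLim B 0 = 0 :=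
    leftLim_eq_of_tendsto (tendsto_const_nhds.congr'
      (eventually_nhdsWithin_of_forall fun x hx => (hB x hx).symm))
  have hB0 : 0 ≤ B 0 := by
    simpa [hB (-1) (by norm_num)] using B.mono (by norm_num : (-1 : ℝ) ≤ 0)
  rw [measureReal_def, B.measure_singleton, hleft, sub_zero, ENNReal.toReal_ofReal hB0]

noncomputable def picard (μ : Measure ℝ) (x : ℝ → ℝ) (f : ℝ → ℝ → ℝ) (y : ℝ → ℝ) (t : ℝ) : ℝ :=
  x t + causalConv μ (fun u => f (y u) u) t

section Tilt

noncomputable def tilt (T lam : ℝ) (y : ℝ → ℝ) (t : Icc 0 T) : ℝ := exp (-(lam * t)) * y t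

variable {T : ℝ} (hT : 0 ≤ T) (lam : ℝ)

noncomputable def untilt (z : Icc 0 T → ℝ) (u : ℝ) : ℝ := exp (lam * u) * IccExtend hT z u

variable {hT lam} {y : ℝ → ℝ} {z z₁ z₂ : Icc 0 T → ℝ} {C : ℝ}

theorem untilt_tilt {u : ℝ} (hu : u ∈ Icc 0 T) : untilt hT lam (tilt T lam y) u = y u := by
  rw [untilt, IccExtend_of_mem _ _ hu, tilt, ← mul_assoc, ← exp_add, add_neg_cancel, exp_zero,
    one_mul]

theorem untilt_sub (u : ℝ) :
    untilt hT lam (z₁ - z₂) u = untilt hT lam z₁ u - untilt hT lam z₂ u :=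
  mul_sub _ _ _

theorem abs_untilt_le (hz : ∀ i, |z i| ≤ C) (u : ℝ) :
    |untilt hT lam z u| ≤ C * exp (lam * u) := by
  rw [untilt, abs_mul, abs_exp, mul_comm]
  exact mul_le_mul_of_nonneg_right (hz _) (exp_pos _).le

theorem measurable_untilt (hz : Measurable z) : Measurable (untilt hT lam z) :=
  (measurable_id.const_mul lam).exp.mul (hz.comp continuous_projIcc.measurable)

theorem measurable_tilt (hy : Measurable fun t : Icc 0 T => y t) : Measurable (tilt T lam y) :=
  (measurable_subtype_coe.const_mul lam).neg.exp.mul hy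

theorem abs_tilt_le (hlam : 0 ≤ lam) (hy : ∀ t ∈ Icc 0 T, |y t| ≤ C) (t : Icc 0 T) :
    |tilt T lam y t| ≤ C := by
  rw [tilt, abs_mul, abs_exp]
  exact (mul_le_of_le_one_left (abs_nonneg _)
    (exp_le_one_iff.2 (neg_nonpos.2 (mul_nonneg hlam t.2.1)))).trans (hy t t.2)

variable {μ : Measure ℝ} {x : ℝ → ℝ} {f : ℝ → ℝ → ℝ}

theorem measurable_tilt_picard [SFinite μ] (hxm : Measurable fun t : Icc 0 T => x t)
    (hfm : Measurable (Function.uncurry f)) (hz : Measurable z) :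
    Measurable (tilt T lam (picard μ x f (untilt hT lam z))) :=
  measurable_tilt (hxm.add ((measurable_causalConv
    (hfm.comp ((measurable_untilt hz).prodMk measurable_id))).comp measurable_subtype_coe))

variable [IsLocallyFiniteMeasure μ] {q : ℝ}

theorem abs_tilt_picard_le {Cx : ℝ}
    (hq : ∀ t ∈ Icc 0 T, ∫ s in Icc 0 t, exp (-(lam * s)) ∂μ ≤ q) (hlam : 0 ≤ lam)
    (hx : ∀ t ∈ Icc 0 T, |x t| ≤ Cx) (hf1 : ∀ (y t : ℝ), 0 ≤ t → |f y t| ≤ |y|)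
    (hC : 0 ≤ C) (hz : ∀ i, |z i| ≤ C) (t : Icc 0 T) :
    |tilt T lam (picard μ x f (untilt hT lam z)) t| ≤ Cx + C * q := by
  have hconv := abs_exp_mul_causalConv_le (μ := μ) hC (hq t t.2)
    (g := fun u => f (untilt hT lam z u) u) fun u hu => (hf1 _ _ hu.1).trans (abs_untilt_le hz u)
  rw [tilt, picard, mul_add]
  exact (abs_add_le _ _).trans (add_le_add (abs_tilt_le hlam hx t) hconv)

theorem abs_tilt_picard_sub_le
    (hq : ∀ t ∈ Icc 0 T, ∫ s in Icc 0 t, exp (-(lam * s)) ∂μ ≤ q)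
    (hfm : Measurable (Function.uncurry f)) (hf1 : ∀ (y t : ℝ), 0 ≤ t → |f y t| ≤ |y|)
    (hf2 : ∀ (y₁ y₂ t : ℝ), 0 ≤ t → |f y₁ t - f y₂ t| ≤ |y₁ - y₂|)
    (hz₁ : Measurable z₁) (hz₂ : Measurable z₂) (hC₁ : ∀ i, |z₁ i| ≤ C) (hC₂ : ∀ i, |z₂ i| ≤ C)
    {D : ℝ} (hD : 0 ≤ D) (hz : ∀ i, |z₁ i - z₂ i| ≤ D) (t : Icc 0 T) :
    |tilt T lam (picard μ x f (untilt hT lam z₁)) t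
      - tilt T lam (picard μ x f (untilt hT lam z₂)) t| ≤ D * q := by
  have hg (w : Icc 0 T → ℝ) (hw : Measurable w) :
      Measurable fun u => f (untilt hT lam w u) u :=
    hfm.comp ((measurable_untilt hw).prodMk measurable_id)
  have hbd (w : Icc 0 T → ℝ) (hw : ∀ i, |w i| ≤ C) (u : ℝ) (hu : u ∈ Icc 0 (t : ℝ)) :
      |f (untilt hT lam w u) u| ≤ C * exp (lam * u) :=
    (hf1 _ _ hu.1).trans (abs_untilt_le hw u)
  have hdiff : tilt T lam (picard μ x f (untilt hT lam z₁)) t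
      - tilt T lam (picard μ x f (untilt hT lam z₂)) t =
      exp (-(lam * t)) * causalConv μ
        ((fun u => f (untilt hT lam z₁ u) u) - fun u => f (untilt hT lam z₂ u) u) t := by
    rw [← causalConv_sub (hg z₁ hz₁) (hg z₂ hz₂) (hbd z₁ hC₁) (hbd z₂ hC₂), tilt, tilt, picard,
      picard]
    ring
  rw [hdiff]
  refine abs_exp_mul_causalConv_le hD (hq t t.2) fun u hu => (hf2 _ _ _ hu.1).trans ?_
  rw [← untilt_sub]
  exact abs_untilt_le hz u

theorem solvesConv_untilt {B : StieltjesFunction ℝ} (hlam : 0 ≤ lam) (hzm : Measurable z)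
    (hzC : ∀ i, |z i| ≤ C) (hz : tilt T lam (picard B.measure x f (untilt hT lam z)) = z) :
    SolvesConv B T x f (untilt hT lam z) := by
  refine ⟨(measurable_untilt hzm).comp measurable_subtype_coe,
    ⟨C * exp (lam * T), fun t ht => ?_⟩, fun t ht => ?_⟩
  · have hC : 0 ≤ C := (abs_nonneg _).trans (hzC ⟨t, ht⟩)
    exact (abs_untilt_le hzC t).trans (by gcongr; exact ht.2)
  · conv_lhs => rw [← hz]
    exact untilt_tilt ht

theorem SolvesConv.tilt_picard_untilt_tilt {B : StieltjesFunction ℝ}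
    (hy : SolvesConv B T x f y) :
    tilt T lam (picard B.measure x f (untilt hT lam (tilt T lam y))) = tilt T lam y := by
  ext ⟨t, ht⟩
  have hpicard : picard B.measure x f (untilt hT lam (tilt T lam y)) t = y t := by
    rw [hy.2.2 t ht, picard, causalConv_congr fun u hu => by
      rw [untilt_tilt ⟨hu.1, hu.2.trans ht.2⟩]]
    rfl
  rw [tilt, tilt, hpicard]

end Tilt

/-- Existence and uniqueness of bounded Borel solutions of the convolution equation
(Lemma B.1, existence and uniqueness part). -/
theorem convolutionEquation_existsUnique
    (B : StieltjesFunction ℝ) (hB : IsNNDistFun B) (hB0 : B 0 < 1)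
    (T : ℝ) (hT : 0 < T)
    (x : ℝ → ℝ) (hxm : Measurable (fun t : Set.Icc (0 : ℝ) T => x t))
    (hxb : ∃ C : ℝ, ∀ t ∈ Set.Icc (0 : ℝ) T, |x t| ≤ C)
    (f : ℝ → ℝ → ℝ) (hfm : Measurable (Function.uncurry f))
    (hf1 : ∀ (y t : ℝ), 0 ≤ t → |f y t| ≤ |y|)
    (hf2 : ∀ (y₁ y₂ t : ℝ), 0 ≤ t → |f y₁ t - f y₂ t| ≤ |y₁ - y₂|) :
    (∃ y : ℝ → ℝ, SolvesConv B T x f y) ∧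
    ∀ y₁ y₂ : ℝ → ℝ, SolvesConv B T x f y₁ → SolvesConv B T x f y₂ →
      ∀ t ∈ Set.Icc (0 : ℝ) T, y₁ t = y₂ t := by
  obtain ⟨Cx, hCx⟩ := hxb
  obtain ⟨lam, hq1, hlam⟩ : ∃ lam, ∫ s in Icc 0 T, exp (-(lam * s)) ∂B.measure < 1 ∧ 0 ≤ lam :=
    (((tendsto_setIntegral_Icc_exp_neg_mul hT.le).eventually
      (gt_mem_nhds (by rwa [B.measureReal_singleton_zero hB.1]))).and
      (eventually_ge_atTop 0)).exists
  set q := ∫ s in Icc 0 T, exp (-(lam * s)) ∂B.measure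
  have hq : ∀ t ∈ Icc 0 T, ∫ s in Icc 0 t, exp (-(lam * s)) ∂B.measure ≤ q := fun t ht =>
    setIntegral_mono_set (by fun_prop : Continuous fun s => exp (-(lam * s))).integrableOn_Icc
      (ae_of_all _ fun s => (exp_pos _).le) (Icc_subset_Icc_right ht.2).eventuallyLE
  obtain ⟨z, ⟨⟨hzm, C, hzC⟩, hz⟩, hz_unique⟩ := existsUnique_bdd_measurable_fixedPoint
    (Ψ := fun z => tilt T lam (picard B.measure x f (untilt hT.le lam z)))
    (integral_nonneg fun s => (exp_pos _).le) hq1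
    (fun _ C hC hz => ⟨Cx + C * q, abs_tilt_picard_le hq hlam hCx hf1 hC hz⟩)
    (fun _ hz => measurable_tilt_picard hxm hfm hz)
    (fun _ _ _ hz₁ hz₂ hC₁ hC₂ _ hD hz =>
      abs_tilt_picard_sub_le hq hfm hf1 hf2 hz₁ hz₂ hC₁ hC₂ hD hz)
  refine ⟨⟨_, solvesConv_untilt hlam hzm hzC hz⟩, fun y₁ y₂ hy₁ hy₂ t ht => ?_⟩
  have htilt {y : ℝ → ℝ} (hy : SolvesConv B T x f y) : tilt T lam y = z :=
    hz_unique _ ⟨⟨measurable_tilt hy.1, _, abs_tilt_le hlam hy.2.1.choose_spec⟩,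
      hy.tilt_picard_untilt_tilt⟩
  simpa [tilt, exp_ne_zero] using congrFun ((htilt hy₁).trans (htilt hy₂).symm) ⟨t, ht⟩
end

section
/- Let B be a distribution function of a nonnegative random variable, let T > 0, and let t₀ ∈ (0,T] satisfy B(t₀) < 1. If bounded Borel functions x, y : [0,T] → ℝ satisfy |y(t)| ≤ |x(t)| + ∫₀ᵗ |y(t−s)| dB(s) for all t ∈ [0,T], then sup_{t∈[0,T]} |y(t)| ≤ (Σ_{i=1}^{⌊T/t₀⌋+1} (1 − B(t₀))^{−i}) · sup_{t∈[0,T]} |x(t)|. -/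
/-!
Let `M k` be the supremum of `|y|` over `[0, T] ∩ [0, k t₀)` and `X` that of `|x|` over `[0, T]`.
For `t < (k + 1) t₀`, split the convolution integral at `c = max (t - k t₀) 0 ≤ t₀`: on `[0, c]`
the integrand is at most `M (k + 1)` and the `dB`-mass at most `B t₀`, on `(c, t]` the integrand
is at most `M k` and the mass at most `1`. Hence `M (k + 1) ≤ X + B t₀ M (k + 1) + M k`, i.e.
`M (k + 1) ≤ q (X + M k)` with `q = (1 - B t₀)⁻¹`, so `M k ≤ (q + ⋯ + q ^ k) X` by induction,
and `k = ⌊T / t₀⌋ + 1` covers all of `[0, T]`.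
-/

open MeasureTheory Filter Set Topology

namespace IsNNDistFun

variable {B : StieltjesFunction ℝ}

theorem tendsto_atBot (hB : IsNNDistFun B) : Tendsto B atBot (𝓝 0) :=
  tendsto_const_nhds.congr' <| (eventually_lt_atBot 0).mono fun a ha => (hB.1 a ha).symm

theorem nonneg (hB : IsNNDistFun B) (a : ℝ) : 0 ≤ B a :=
  B.mono.le_of_tendsto hB.tendsto_atBot a

theorem isProbabilityMeasure (hB : IsNNDistFun B) : IsProbabilityMeasure B.measure :=
  B.isProbabilityMeasure hB.tendsto_atBot hB.2

theorem measureReal_Iic (hB : IsNNDistFun B) (a : ℝ) : B.measure.real (Iic a) = B a := by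
  rw [measureReal_def, B.measure_Iic hB.tendsto_atBot, sub_zero,
    ENNReal.toReal_ofReal (hB.nonneg a)]

end IsNNDistFun

theorem setIntegral_union_le_of_abs_le {α : Type*} [MeasurableSpace α] {μ : Measure α}
    [IsFiniteMeasure μ] {f : α → ℝ} {s t : Set α} {a b : ℝ} (hst : Disjoint s t)
    (ht : MeasurableSet t) (ha : 0 ≤ a) (hb : 0 ≤ b) (hfs : ∀ x ∈ s, |f x| ≤ a)
    (hft : ∀ x ∈ t, |f x| ≤ b) :
    ∫ x in s ∪ t, f x ∂μ ≤ a * μ.real s + b * μ.real t := by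
  by_cases hf : IntegrableOn f (s ∪ t) μ
  · rw [setIntegral_union hst ht (hf.mono_set subset_union_left)
      (hf.mono_set subset_union_right)]
    gcongr
    · exact (Real.le_norm_self _).trans
        (norm_setIntegral_le_of_norm_le_const (measure_lt_top μ s) hfs)
    · exact (Real.le_norm_self _).trans
        (norm_setIntegral_le_of_norm_le_const (measure_lt_top μ t) hft)
  · rw [integral_undef hf]
    positivity

theorem sum_Icc_one_pow_succ {R : Type*} [CommSemiring R] (q : R) (k : ℕ) :
    ∑ i ∈ Finset.Icc 1 (k + 1), q ^ i = q * (1 + ∑ i ∈ Finset.Icc 1 k, q ^ i) := by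
  induction k with
  | zero => simp
  | succ k ih =>
    conv_lhs => rw [Finset.sum_Icc_succ_top (by omega), ih]
    rw [Finset.sum_Icc_succ_top (by omega)]
    ring

theorem le_sum_Icc_one_pow_mul_of_le_mul_add {M : ℕ → ℝ} {q X : ℝ} (hq : 0 ≤ q) (hM₀ : M 0 ≤ 0)
    (hM : ∀ k, M (k + 1) ≤ q * (X + M k)) (k : ℕ) :
    M k ≤ (∑ i ∈ Finset.Icc 1 k, q ^ i) * X := by
  induction k with
  | zero => simpa using hM₀
  | succ k ih =>
    calc M (k + 1) ≤ q * (X + M k) := hM k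
      _ ≤ q * (X + (∑ i ∈ Finset.Icc 1 k, q ^ i) * X) := by gcongr
      _ = (∑ i ∈ Finset.Icc 1 (k + 1), q ^ i) * X := by rw [sum_Icc_one_pow_succ]; ring

noncomputable def truncSup (y : ℝ → ℝ) (T a : ℝ) : ℝ :=
  ⨆ t : Icc (0 : ℝ) T, if (t : ℝ) < a then |y t| else 0

section truncSup

variable {y : ℝ → ℝ} {T a : ℝ}

theorem truncSup_nonneg : 0 ≤ truncSup y T a :=
  Real.iSup_nonneg fun _ => by split_ifs <;> positivity

theorem truncSup_le {m : ℝ} (hm : 0 ≤ m) (h : ∀ t ∈ Icc 0 T, t < a → |y t| ≤ m) :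
    truncSup y T a ≤ m :=
  Real.iSup_le (fun t => by split_ifs with ht; exacts [h t t.2 ht, hm]) hm

theorem abs_le_truncSup (hy : ∃ C, ∀ t ∈ Icc 0 T, |y t| ≤ C) {t : ℝ} (ht : t ∈ Icc 0 T)
    (hta : t < a) : |y t| ≤ truncSup y T a := by
  obtain ⟨C, hC⟩ := hy
  have hbdd : BddAbove (range fun t : Icc (0 : ℝ) T => if (t : ℝ) < a then |y t| else 0) := by
    refine ⟨max C 0, forall_mem_range.2 fun t => ?_⟩
    split_ifs
    exacts [le_max_of_le_left (hC t t.2), le_max_right C 0]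
  exact (if_pos hta).symm.trans_le (le_ciSup hbdd ⟨t, ht⟩)

theorem truncSup_of_nonpos (ha : a ≤ 0) : truncSup y T a = 0 :=
  le_antisymm (truncSup_le le_rfl fun _ ht hta => absurd (ht.1.trans_lt hta) ha.not_gt)
    truncSup_nonneg

theorem truncSup_of_lt (hT : T < a) : truncSup y T a = ⨆ t : Icc (0 : ℝ) T, |y t| :=
  iSup_congr fun t => if_pos (t.2.2.trans_lt hT)

end truncSup

section ConvolutionInequality

variable {B : StieltjesFunction ℝ} {T t₀ a X : ℝ} {x y : ℝ → ℝ}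

theorem abs_le_add_truncSup (hB : IsNNDistFun B) (ht₀ : 0 < t₀) (ha : 0 ≤ a)
    (hy : ∃ C, ∀ t ∈ Icc 0 T, |y t| ≤ C) (hX : ∀ t ∈ Icc 0 T, |x t| ≤ X)
    (hineq : ∀ t ∈ Icc 0 T, |y t| ≤ |x t| + ∫ s in Icc 0 t, |y (t - s)| ∂B.measure)
    {t : ℝ} (ht : t ∈ Icc 0 T) (hta : t < a + t₀) :
    |y t| ≤ X + B t₀ * truncSup y T (a + t₀) + truncSup y T a := by
  have := hB.isProbabilityMeasure
  obtain ⟨c, hc₀, hac, hct, hct₀⟩ : ∃ c, 0 ≤ c ∧ t - a ≤ c ∧ c ≤ t ∧ c ≤ t₀ :=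
    ⟨max (t - a) 0, le_max_right _ _, le_max_left _ _, max_le (by linarith) ht.1,
      max_le (by linarith) ht₀.le⟩
  have hint : ∫ s in Icc 0 t, |y (t - s)| ∂B.measure ≤
      truncSup y T (a + t₀) * B.measure.real (Icc 0 c) +
        truncSup y T a * B.measure.real (Ioc c t) := by
    rw [← Icc_union_Ioc_eq_Icc hc₀ hct]
    refine setIntegral_union_le_of_abs_le
      ((Iic_disjoint_Ioc le_rfl).mono_left Icc_subset_Iic_self) measurableSet_Ioc truncSup_nonneg
      truncSup_nonneg ?_ ?_
    · rintro s ⟨hs₀, hsc⟩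
      rw [abs_abs]
      exact abs_le_truncSup hy ⟨by linarith, by linarith [ht.2]⟩ (by linarith)
    · rintro s ⟨hcs, hst⟩
      rw [abs_abs]
      exact abs_le_truncSup hy ⟨by linarith, by linarith [ht.2]⟩ (by linarith)
  have hmass : B.measure.real (Icc 0 c) ≤ B t₀ :=
    calc B.measure.real (Icc 0 c) ≤ B.measure.real (Iic c) := measureReal_mono Icc_subset_Iic_self
      _ = B c := hB.measureReal_Iic c
      _ ≤ B t₀ := B.mono hct₀
  calc |y t| ≤ |x t| + ∫ s in Icc 0 t, |y (t - s)| ∂B.measure := hineq t ht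
    _ ≤ X + (truncSup y T (a + t₀) * B t₀ + truncSup y T a * 1) := by
      gcongr
      · exact hX t ht
      · exact hint.trans (add_le_add (mul_le_mul_of_nonneg_left hmass truncSup_nonneg)
          (mul_le_mul_of_nonneg_left measureReal_le_one truncSup_nonneg))
    _ = X + B t₀ * truncSup y T (a + t₀) + truncSup y T a := by ring

theorem truncSup_add_le (hB : IsNNDistFun B) (ht₀ : 0 < t₀) (hBt₀ : B t₀ < 1) (ha : 0 ≤ a)
    (hy : ∃ C, ∀ t ∈ Icc 0 T, |y t| ≤ C) (hX₀ : 0 ≤ X) (hX : ∀ t ∈ Icc 0 T, |x t| ≤ X)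
    (hineq : ∀ t ∈ Icc 0 T, |y t| ≤ |x t| + ∫ s in Icc 0 t, |y (t - s)| ∂B.measure) :
    truncSup y T (a + t₀) ≤ (1 - B t₀)⁻¹ * (X + truncSup y T a) := by
  have hstep : truncSup y T (a + t₀) ≤ X + B t₀ * truncSup y T (a + t₀) + truncSup y T a :=
    truncSup_le
      (add_nonneg (add_nonneg hX₀ (mul_nonneg (hB.nonneg t₀) truncSup_nonneg)) truncSup_nonneg)
      fun _ ht hta => abs_le_add_truncSup hB ht₀ ha hy hX hineq ht hta
  rw [le_inv_mul_iff₀ (sub_pos.2 hBt₀)]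
  linarith

end ConvolutionInequality

theorem convolutionInequality_bound_general
    (B : StieltjesFunction ℝ) (hB : IsNNDistFun B)
    (T : ℝ)
    (t₀ : ℝ) (ht₀ : t₀ ∈ Set.Ioc (0 : ℝ) T) (hBt₀ : B t₀ < 1)
    (x y : ℝ → ℝ)
    (hxb : ∃ C : ℝ, ∀ t ∈ Set.Icc (0 : ℝ) T, |x t| ≤ C)
    (hyb : ∃ C : ℝ, ∀ t ∈ Set.Icc (0 : ℝ) T, |y t| ≤ C)
    (hineq : ∀ t ∈ Set.Icc (0 : ℝ) T,
      |y t| ≤ |x t| + ∫ s in Set.Icc (0 : ℝ) t, |y (t - s)| ∂B.measure) :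
    (⨆ t : Set.Icc (0 : ℝ) T, |y t|) ≤
      (∑ i ∈ Finset.Icc 1 (⌊T / t₀⌋₊ + 1), ((1 - B t₀)⁻¹) ^ i) *
        ⨆ t : Set.Icc (0 : ℝ) T, |x t| := by
  obtain ⟨Cx, hCx⟩ := hxb
  set X := ⨆ t : Icc (0 : ℝ) T, |x t|
  have hX (t : ℝ) (ht : t ∈ Icc 0 T) : |x t| ≤ X :=
    le_ciSup (f := fun t : Icc (0 : ℝ) T => |x t|) ⟨Cx, forall_mem_range.2 fun t => hCx t t.2⟩
      ⟨t, ht⟩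
  have hstep (k : ℕ) :
      truncSup y T ((k + 1 : ℕ) * t₀) ≤ (1 - B t₀)⁻¹ * (X + truncSup y T (k * t₀)) := by
    rw [Nat.cast_succ, add_one_mul]
    exact truncSup_add_le hB ht₀.1 hBt₀ (mul_nonneg k.cast_nonneg ht₀.1.le) hyb
      (Real.iSup_nonneg fun _ => abs_nonneg _) hX hineq
  have hT : T < (⌊T / t₀⌋₊ + 1 : ℕ) * t₀ := by
    rw [← div_lt_iff₀ ht₀.1]
    exact_mod_cast Nat.lt_floor_add_one (T / t₀)
  rw [← truncSup_of_lt hT]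
  exact le_sum_Icc_one_pow_mul_of_le_mul_add (M := fun k : ℕ => truncSup y T (k * t₀))
    (inv_nonneg.2 (sub_nonneg.2 hBt₀.le))
    (truncSup_of_nonpos (by simp)).le hstep _

/-- Gronwall-type bound for the convolution inequality (Lemma B.1, a priori bound). -/
theorem convolutionInequality_bound
    (B : StieltjesFunction ℝ) (hB : IsNNDistFun B)
    (T : ℝ) (hT : 0 < T)
    (t₀ : ℝ) (ht₀ : t₀ ∈ Set.Ioc (0 : ℝ) T) (hBt₀ : B t₀ < 1)
    (x y : ℝ → ℝ)
    (hxm : Measurable (fun t : Set.Icc (0 : ℝ) T => x t))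
    (hxb : ∃ C : ℝ, ∀ t ∈ Set.Icc (0 : ℝ) T, |x t| ≤ C)
    (hym : Measurable (fun t : Set.Icc (0 : ℝ) T => y t))
    (hyb : ∃ C : ℝ, ∀ t ∈ Set.Icc (0 : ℝ) T, |y t| ≤ C)
    (hineq : ∀ t ∈ Set.Icc (0 : ℝ) T,
      |y t| ≤ |x t| + ∫ s in Set.Icc (0 : ℝ) t, |y (t - s)| ∂B.measure) :
    (⨆ t : Set.Icc (0 : ℝ) T, |y t|) ≤
      (∑ i ∈ Finset.Icc 1 (⌊T / t₀⌋₊ + 1), ((1 - B t₀)⁻¹) ^ i) *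
        ⨆ t : Set.Icc (0 : ℝ) T, |x t| :=
  convolutionInequality_bound_general B hB T t₀ ht₀ hBt₀ x y hxb hyb hineq
end

section
/- Let B be a distribution function of a nonnegative random variable with B(0) < 1, let T > 0, let x : [0,T] → ℝ be bounded Borel, and let f : ℝ × [0,∞) → ℝ be Borel with |f(y,t)| ≤ |y| and |f(y₁,t) − f(y₂,t)| ≤ |y₁ − y₂| for all y, y₁, y₂, t. Suppose x is continuous on [0,T], for each y ∈ ℝ the function t ↦ f(y,t) admits limits on the right and limits on the left at every point, and B is continuous on [0,T] with B(0) = 0. Then the unique bounded Borel solution y of y(t) = x(t) + ∫₀ᵗ f(y(t−s), t−s) dB(s), t ∈ [0,T], is continuous. -/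
open MeasureTheory Filter Set Topology

/-- `g` admits limits on the right and limits on the left at every point of `[0,∞)`. -/
def HasOneSidedLimitsNonneg (g : ℝ → ℝ) : Prop :=
  (∀ t ≥ (0 : ℝ), ∃ L : ℝ, Tendsto g (nhdsWithin t (Set.Ioi t)) (nhds L)) ∧
  (∀ t > (0 : ℝ), ∃ L : ℝ, Tendsto g (nhdsWithin t (Set.Iio t)) (nhds L))

/-!
A function with one-sided limits at every point has only countably many discontinuities: for
each `ε > 0`, the points where it oscillates by at least `ε` are isolated. Since `dB` has no atoms
on `[0,T]`, for `dB`-almost every `s` the integrand `g(t - s)` is then continuous in `t`, and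
dominated convergence makes `t ↦ ∫₀ᵗ g(t - s) dB(s)` continuous on `[0,T]`. With
`g(u) = f(z(u), u)` this shows that the Picard map `z ↦ x + ∫₀ᵗ f(z(t - s), t - s) dB(s)` preserves
continuity on `[0,T]`.

Because `dB{0} = 0`, `q = ∫₀ᵀ e^{-λs} dB(s) < 1` for `λ` large, and the Lipschitz bound on `f` makes
the Picard map a `q`-contraction for the weight `e^{λt}`. So the Picard iterates of `0`, all
continuous, converge uniformly on `[0,T]` to the bounded Borel solution, which is therefore
continuous.
-/

section OneSidedLimits

variable {α E : Type*} [TopologicalSpace α] [PseudoMetricSpace E] {g : α → E} {s : Set α}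

lemma eventually_nhdsWithin_eventually_dist_lt {I : Set α} {u : α} {L : E} (hI : IsOpen I)
    (h : Tendsto g (𝓝[s ∩ I] u) (𝓝 L)) {ε : ℝ} (hε : 0 < ε) :
    ∀ᶠ w in 𝓝[I] u, w ∈ s → ∀ᶠ v in 𝓝[s] w, dist (g v) (g w) < ε := by
  obtain ⟨U, hUo, huU, hU⟩ := mem_nhdsWithin.1 (Metric.tendsto_nhds.1 h (ε / 2) (half_pos hε))
  refine mem_nhdsWithin.2 ⟨U, hUo, huU, fun w ⟨hwU, hwI⟩ hws => ?_⟩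
  have hgw : dist (g w) L < ε / 2 := hU ⟨hwU, hws, hwI⟩
  filter_upwards [mem_nhdsWithin_of_mem_nhds ((hUo.inter hI).mem_nhds ⟨hwU, hwI⟩),
    self_mem_nhdsWithin] with v hv hvs
  have hgv : dist (g v) L < ε / 2 := hU ⟨hv.1, hvs, hv.2⟩
  linarith [dist_triangle_right (g v) (g w) L]

variable [LinearOrder α] [OrderClosedTopology α]

lemma isDiscrete_setOf_frequently_le_dist
    (hR : ∀ u ∈ s, ∃ L, Tendsto g (𝓝[s ∩ Ioi u] u) (𝓝 L))
    (hL : ∀ u ∈ s, ∃ L, Tendsto g (𝓝[s ∩ Iio u] u) (𝓝 L)) {ε : ℝ} (hε : 0 < ε) :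
    IsDiscrete {u ∈ s | ∃ᶠ v in 𝓝[s] u, ε ≤ dist (g v) (g u)} := by
  refine isDiscrete_iff_nhdsNE.2 fun u hu => inf_principal_eq_bot.2 ?_
  obtain ⟨R, hR⟩ := hR u hu.1
  obtain ⟨L, hL⟩ := hL u hu.1
  have hclear : ∀ I : Set α, (∀ᶠ w in 𝓝[I] u, w ∈ s → ∀ᶠ v in 𝓝[s] w, dist (g v) (g w) < ε) →
      {u ∈ s | ∃ᶠ v in 𝓝[s] u, ε ≤ dist (g v) (g u)}ᶜ ∈ 𝓝[I] u := fun I hI =>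
    hI.mono fun w hw ⟨hws, hfreq⟩ => hfreq ((hw hws).mono fun v hv => not_le.2 hv)
  rw [← nhdsLT_sup_nhdsGT, mem_sup]
  exact ⟨hclear _ (eventually_nhdsWithin_eventually_dist_lt isOpen_Iio hL hε),
    hclear _ (eventually_nhdsWithin_eventually_dist_lt isOpen_Ioi hR hε)⟩

theorem countable_setOf_not_continuousWithinAt [SecondCountableTopology α]
    (hR : ∀ u ∈ s, ∃ L, Tendsto g (𝓝[s ∩ Ioi u] u) (𝓝 L))
    (hL : ∀ u ∈ s, ∃ L, Tendsto g (𝓝[s ∩ Iio u] u) (𝓝 L)) :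
    {u ∈ s | ¬ ContinuousWithinAt g s u}.Countable := by
  have hsub : {u ∈ s | ¬ ContinuousWithinAt g s u} ⊆
      ⋃ n : ℕ, {u ∈ s | ∃ᶠ v in 𝓝[s] u, 1 / ((n : ℝ) + 1) ≤ dist (g v) (g u)} := by
    rintro u ⟨hus, hu⟩
    rw [ContinuousWithinAt, Metric.tendsto_nhds] at hu
    push Not at hu
    obtain ⟨ε, hε, hfreq⟩ := hu
    obtain ⟨n, hn⟩ := exists_nat_one_div_lt hε
    exact mem_iUnion.2 ⟨n, hus, hfreq.mono fun v hv => hn.le.trans hv⟩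
  refine (countable_iUnion fun n => ?_).mono hsub
  exact (HereditarilyLindelofSpace.isLindelof _).countable_of_isDiscrete
    (isDiscrete_setOf_frequently_le_dist hR hL (by positivity))

end OneSidedLimits

lemma tendsto_apply_of_dist_le_dist {α E F : Type*} [PseudoMetricSpace E] [PseudoMetricSpace F]
    {l : Filter α} {Φ : E → α → F} {z : α → E} {c : E} {L : F}
    (hΦ : ∀ᶠ v in l, ∀ a b, dist (Φ a v) (Φ b v) ≤ dist a b) (hz : Tendsto z l (𝓝 c))
    (hc : Tendsto (Φ c) l (𝓝 L)) : Tendsto (fun v => Φ (z v) v) l (𝓝 L) := by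
  refine tendsto_of_tendsto_of_dist hc (squeeze_zero' (Eventually.of_forall fun _ => dist_nonneg)
    (hΦ.mono fun v hv => (hv c (z v)).trans_eq (dist_comm _ _)) ?_)
  exact tendsto_iff_dist_tendsto_zero.1 hz

lemma MeasureTheory.nullSingletonClass_restrict {α : Type*} [MeasurableSpace α]
    [MeasurableSingletonClass α] {μ : Measure α} {s : Set α} (h : ∀ a ∈ s, μ {a} = 0) :
    NullSingletonClass (μ.restrict s) where
  measure_singleton a := by
    by_cases ha : a ∈ s
    · exact nonpos_iff_eq_zero.1 ((Measure.restrict_apply_le _ _).trans_eq (h a ha))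
    · rw [Measure.restrict_apply (measurableSet_singleton a), singleton_inter_eq_empty.2 ha,
        measure_empty]

lemma StieltjesFunction.measure_singleton_eq_zero {B : StieltjesFunction ℝ} {a : ℝ}
    (h : ContinuousWithinAt B (Iio a) a) : B.measure {a} = 0 := by
  rw [B.measure_singleton, leftLim_eq_of_tendsto h, sub_self, ENNReal.ofReal_zero]

lemma tendsto_integral_exp_neg_mul_atTop (ν : Measure ℝ) [IsFiniteMeasure ν]
    (hν : ∀ᵐ s ∂ν, 0 < s) : Tendsto (fun r : ℝ => ∫ s, Real.exp (-r * s) ∂ν) atTop (𝓝 0) := by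
  have hlim : ∀ᵐ s ∂ν, Tendsto (fun r : ℝ => Real.exp (-r * s)) atTop (𝓝 0) :=
    hν.mono fun s hs =>
      Real.tendsto_exp_atBot.comp (tendsto_neg_atTop_atBot.atBot_mul_const hs)
  have hbound : ∀ᶠ r : ℝ in atTop, ∀ᵐ s ∂ν, ‖Real.exp (-r * s)‖ ≤ 1 := by
    filter_upwards [eventually_ge_atTop 0] with r hr
    filter_upwards [hν] with s hs
    rw [Real.norm_eq_abs, Real.abs_exp, Real.exp_le_one_iff]
    nlinarith
  simpa using tendsto_integral_filter_of_dominated_convergence (fun _ => 1)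
    (Eventually.of_forall fun r => by fun_prop) hbound (integrable_const 1) hlim

lemma continuousWithinAt_indicator_Icc_comp_sub {E : Type*} [TopologicalSpace E] [Zero E]
    {g : ℝ → E} {T t s : ℝ} (hs : 0 ≤ s) (hst : s ≠ t)
    (hg : s < t → ContinuousWithinAt g (Icc 0 T) (t - s)) :
    ContinuousWithinAt (fun t' => (Icc 0 t').indicator (fun s => g (t' - s)) s) (Icc 0 T) t := by
  rcases hst.lt_or_gt with hlt | hgt
  · have hgs : ContinuousWithinAt (fun t' => g (t' - s)) (Icc 0 T ∩ Ioi s) t :=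
      (hg hlt).comp (f := (· - s)) (x := t) (continuous_sub_right s).continuousWithinAt
        fun t' ht' => ⟨by linarith [ht'.2.out], by linarith [ht'.1.2]⟩
    refine (continuousWithinAt_inter (Ioi_mem_nhds hlt)).1 (hgs.congr (fun t' ht' => ?_) ?_)
    · exact indicator_of_mem (show s ∈ Icc 0 t' from ⟨hs, ht'.2.out.le⟩) _
    · exact indicator_of_mem (show s ∈ Icc 0 t from ⟨hs, hlt.le⟩) _
  · refine ((continuousAt_const (y := (0 : E))).congr ?_).continuousWithinAt
    filter_upwards [Iio_mem_nhds hgt] with t' ht'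
    exact (indicator_of_notMem (fun h => (h.2.trans_lt ht').false) _).symm

theorem continuousOn_setIntegral_Icc_comp_sub {E : Type*} [NormedAddCommGroup E]
    [NormedSpace ℝ E] {μ : Measure ℝ} [IsLocallyFiniteMeasure μ] {T : ℝ}
    [NullSingletonClass (μ.restrict (Icc 0 T))] {g : ℝ → E} (hgm : StronglyMeasurable g)
    {C : ℝ} (hgC : ∀ u ∈ Icc 0 T, ‖g u‖ ≤ C)
    (hD : {u ∈ Icc 0 T | ¬ ContinuousWithinAt g (Icc 0 T) u}.Countable) :
    ContinuousOn (fun t => ∫ s in Icc 0 t, g (t - s) ∂μ) (Icc 0 T) := by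
  intro t ht
  set ν := μ.restrict (Icc 0 T)
  have : IsFiniteMeasure ν := isFiniteMeasure_restrict.2 isCompact_Icc.measure_lt_top.ne
  set F : ℝ → ℝ → E := fun t' => (Icc 0 t').indicator fun s => g (t' - s)
  have hF : ∀ t' ∈ Icc 0 T, ∫ s, F t' s ∂ν = ∫ s in Icc 0 t', g (t' - s) ∂μ := fun t' ht' => by
    rw [integral_indicator measurableSet_Icc, Measure.restrict_restrict measurableSet_Icc,
      inter_eq_self_of_subset_left (Icc_subset_Icc_right ht'.2)]
  have hFC : ∀ t' ∈ Icc 0 T, ∀ s, ‖F t' s‖ ≤ max C 0 := fun t' ht' s => by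
    dsimp only [F]
    by_cases hs : s ∈ Icc 0 t'
    · rw [indicator_of_mem hs]
      exact (hgC _ ⟨by linarith [hs.2], by linarith [hs.1, ht'.2]⟩).trans (le_max_left _ _)
    · rw [indicator_of_notMem hs, norm_zero]
      exact le_max_right _ _
  have hcont : ∀ᵐ s ∂ν, ContinuousWithinAt (F · s) (Icc 0 T) t := by
    filter_upwards [ae_restrict_mem measurableSet_Icc, Measure.ae_ne ν t,
      (hD.image (t - ·)).ae_notMem ν] with s hs hst hsD
    refine continuousWithinAt_indicator_Icc_comp_sub hs.1 hst fun hlt => ?_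
    by_contra hg
    exact hsD ⟨t - s, ⟨⟨by linarith, by linarith [hs.1, ht.2]⟩, hg⟩, sub_sub_cancel t s⟩
  refine (continuousWithinAt_of_dominated ?_ ?_ (integrable_const (max C 0)) hcont).congr
    (fun t' ht' => (hF t' ht').symm) (hF t ht).symm
  · exact Eventually.of_forall fun t' => ((hgm.comp_measurable (measurable_const.sub
      measurable_id)).indicator measurableSet_Icc).aestronglyMeasurable
  · filter_upwards [self_mem_nhdsWithin] with t' ht' using ae_of_all _ (hFC t' ht')

lemma continuousOn_of_dist_le_mul_pow {X Y : Type*} [TopologicalSpace X] [PseudoMetricSpace Y]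
    {Z : ℕ → X → Y} {y : X → Y} {s : Set X} {C q : ℝ} (hZ : ∀ n, ContinuousOn (Z n) s)
    (hq₀ : 0 ≤ q) (hq₁ : q < 1) (hy : ∀ n, ∀ x ∈ s, dist (y x) (Z n x) ≤ C * q ^ n) :
    ContinuousOn y s := by
  have hlim : Tendsto (fun n => C * q ^ n) atTop (𝓝 0) := by
    simpa using (tendsto_pow_atTop_nhds_zero_of_lt_one hq₀ hq₁).const_mul C
  have hunif : TendstoUniformlyOn Z y atTop s := Metric.tendstoUniformlyOn_iff.2 fun ε hε =>
    (hlim.eventually_lt_const hε).mono fun n hn x hx => (hy n x hx).trans_lt hn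
  exact hunif.continuousOn (Eventually.of_forall hZ).frequently

section ConvIntegral

variable {μ : Measure ℝ} {f : ℝ → ℝ → ℝ} {T : ℝ}

noncomputable def convIntegral (μ : Measure ℝ) (f : ℝ → ℝ → ℝ) (z : ℝ → ℝ) (t : ℝ) : ℝ :=
  ∫ s in Icc 0 t, f (z (t - s)) (t - s) ∂μ

lemma convIntegral_congr {z₁ z₂ : ℝ → ℝ} (h : EqOn z₁ z₂ (Icc 0 T)) {t : ℝ} (ht : t ≤ T) :
    convIntegral μ f z₁ t = convIntegral μ f z₂ t :=
  setIntegral_congr_fun measurableSet_Icc fun s hs => by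
    simp only [h ⟨sub_nonneg.2 hs.2, by linarith [hs.1]⟩]

variable [IsLocallyFiniteMeasure μ]

lemma integrableOn_convIntegrand (hfm : Measurable (Function.uncurry f))
    (hf1 : ∀ y t : ℝ, 0 ≤ t → |f y t| ≤ |y|) {z : ℝ → ℝ} (hzm : Measurable z) {C : ℝ}
    (hzC : ∀ u ∈ Icc 0 T, |z u| ≤ C) {t : ℝ} (ht : t ≤ T) :
    IntegrableOn (fun s => f (z (t - s)) (t - s)) (Icc 0 t) μ := by
  refine Measure.integrableOn_of_bounded (M := C) isCompact_Icc.measure_lt_top.ne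
    ((hfm.comp (hzm.prodMk measurable_id)).comp (measurable_const.sub measurable_id)
      ).aestronglyMeasurable (ae_restrict_of_forall_mem measurableSet_Icc fun s hs => ?_)
  have hts : t - s ∈ Icc 0 T := ⟨sub_nonneg.2 hs.2, by linarith [hs.1]⟩
  exact (hf1 _ _ hts.1).trans (hzC _ hts)

lemma abs_convIntegral_sub_le (hf2 : ∀ y₁ y₂ t : ℝ, 0 ≤ t → |f y₁ t - f y₂ t| ≤ |y₁ - y₂|)
    {z₁ z₂ : ℝ → ℝ} {t : ℝ} (ht : t ∈ Icc 0 T)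
    (h₁ : IntegrableOn (fun s => f (z₁ (t - s)) (t - s)) (Icc 0 t) μ)
    (h₂ : IntegrableOn (fun s => f (z₂ (t - s)) (t - s)) (Icc 0 t) μ) {c r : ℝ}
    (h : ∀ u ∈ Icc 0 T, |z₁ u - z₂ u| ≤ c * Real.exp (r * u)) :
    |convIntegral μ f z₁ t - convIntegral μ f z₂ t| ≤
      (∫ s in Icc 0 T, Real.exp (-r * s) ∂μ) * (c * Real.exp (r * t)) := by
  have hc : 0 ≤ c * Real.exp (r * t) := (abs_nonneg _).trans (h t ht)
  have hexp : IntegrableOn (fun s => Real.exp (-r * s)) (Icc 0 T) μ :=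
    (by fun_prop : Continuous fun s => Real.exp (-r * s)).integrableOn_Icc
  have hsub : Icc 0 t ⊆ Icc 0 T := Icc_subset_Icc_right ht.2
  calc |convIntegral μ f z₁ t - convIntegral μ f z₂ t|
      = ‖∫ s in Icc 0 t, (f (z₁ (t - s)) (t - s) - f (z₂ (t - s)) (t - s)) ∂μ‖ := by
        rw [convIntegral, convIntegral, integral_sub h₁ h₂, Real.norm_eq_abs]
    _ ≤ ∫ s in Icc 0 t, c * Real.exp (r * t) * Real.exp (-r * s) ∂μ := by
        refine norm_integral_le_of_norm_le ((hexp.mono_set hsub).const_mul _)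
          (ae_restrict_of_forall_mem measurableSet_Icc fun s hs => ?_)
        have hts : t - s ∈ Icc 0 T := ⟨sub_nonneg.2 hs.2, by linarith [hs.1, ht.2]⟩
        calc _ ≤ |z₁ (t - s) - z₂ (t - s)| := hf2 _ _ _ hts.1
          _ ≤ c * Real.exp (r * (t - s)) := h _ hts
          _ = c * Real.exp (r * t) * Real.exp (-r * s) := by
            rw [mul_assoc, ← Real.exp_add]; ring_nf
    _ = c * Real.exp (r * t) * ∫ s in Icc 0 t, Real.exp (-r * s) ∂μ := integral_const_mul _ _
    _ ≤ c * Real.exp (r * t) * ∫ s in Icc 0 T, Real.exp (-r * s) ∂μ :=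
        mul_le_mul_of_nonneg_left (setIntegral_mono_set hexp
          (ae_of_all _ fun s => (Real.exp_pos _).le) hsub.eventuallyLE) hc
    _ = _ := mul_comm _ _

variable [NullSingletonClass (μ.restrict (Icc 0 T))]

lemma continuousOn_convIntegral (hfm : Measurable (Function.uncurry f))
    (hf1 : ∀ y t : ℝ, 0 ≤ t → |f y t| ≤ |y|)
    (hf2 : ∀ y₁ y₂ t : ℝ, 0 ≤ t → |f y₁ t - f y₂ t| ≤ |y₁ - y₂|)
    (hfl : ∀ y : ℝ, HasOneSidedLimitsNonneg (f y)) {z : ℝ → ℝ} (hzm : Measurable z)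
    (hzc : ContinuousOn z (Icc 0 T)) : ContinuousOn (convIntegral μ f z) (Icc 0 T) := by
  obtain ⟨C, hC⟩ := isCompact_Icc.exists_bound_of_continuousOn hzc
  have hlim : ∀ I : Set ℝ, ∀ u ∈ Icc 0 T, (∃ L, Tendsto (f (z u)) (𝓝[I] u) (𝓝 L)) →
      ∃ L, Tendsto (fun v => f (z v) v) (𝓝[Icc 0 T ∩ I] u) (𝓝 L) := by
    rintro I u hu ⟨L, hL⟩
    refine ⟨L, tendsto_apply_of_dist_le_dist ?_
      ((hzc u hu).mono_left (nhdsWithin_mono _ inter_subset_left))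
      (hL.mono_left (nhdsWithin_mono _ inter_subset_right))⟩
    filter_upwards [self_mem_nhdsWithin] with v hv a b
    simpa only [Real.dist_eq] using hf2 a b v hv.1.1
  refine continuousOn_setIntegral_Icc_comp_sub
    (hfm.comp (hzm.prodMk measurable_id)).stronglyMeasurable
    (fun u hu => (hf1 _ _ hu.1).trans (hC u hu))
    (countable_setOf_not_continuousWithinAt (fun u hu => hlim _ u hu ((hfl _).1 u hu.1))
      fun u hu => ?_)
  rcases hu.1.eq_or_lt with rfl | hu₀
  · have hempty : Icc 0 T ∩ Iio 0 = (∅ : Set ℝ) :=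
      eq_empty_of_forall_notMem fun v hv => hv.2.not_ge hv.1.1
    exact ⟨0, by simp only [hempty, nhdsWithin_empty, tendsto_bot]⟩
  · exact hlim _ u hu ((hfl _).2 u hu₀)

end ConvIntegral

lemma exists_setIntegral_exp_neg_mul_lt_one {μ : Measure ℝ} [IsLocallyFiniteMeasure μ] {T : ℝ}
    [NullSingletonClass (μ.restrict (Icc 0 T))] :
    ∃ r : ℝ, 0 ≤ r ∧ ∫ s in Icc 0 T, Real.exp (-r * s) ∂μ < 1 := by
  have : IsFiniteMeasure (μ.restrict (Icc 0 T)) :=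
    isFiniteMeasure_restrict.2 isCompact_Icc.measure_lt_top.ne
  have hpos : ∀ᵐ s ∂μ.restrict (Icc 0 T), 0 < s := by
    filter_upwards [ae_restrict_mem measurableSet_Icc, Measure.ae_ne _ 0] with s hs hs₀
    exact hs.1.lt_of_ne hs₀.symm
  exact ((eventually_ge_atTop 0).and
    ((tendsto_integral_exp_neg_mul_atTop _ hpos).eventually_lt_const one_pos)).exists

lemma ContinuousOn.measurable_indicator {α β : Type*} [TopologicalSpace α] [MeasurableSpace α]
    [OpensMeasurableSpace α] [TopologicalSpace β] [MeasurableSpace β] [BorelSpace β] [Zero β]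
    {g : α → β} {s : Set α} (hg : ContinuousOn g s) (hs : MeasurableSet s) :
    Measurable (s.indicator g) := by
  classical
  rw [← piecewise_eq_indicator]
  exact hg.measurable_piecewise continuousOn_const hs

theorem continuousOn_of_eq_add_convIntegral {μ : Measure ℝ} [IsLocallyFiniteMeasure μ] {T : ℝ}
    [NullSingletonClass (μ.restrict (Icc 0 T))] {f : ℝ → ℝ → ℝ}
    (hfm : Measurable (Function.uncurry f)) (hf1 : ∀ y t : ℝ, 0 ≤ t → |f y t| ≤ |y|)
    (hf2 : ∀ y₁ y₂ t : ℝ, 0 ≤ t → |f y₁ t - f y₂ t| ≤ |y₁ - y₂|)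
    (hfl : ∀ y : ℝ, HasOneSidedLimitsNonneg (f y)) {x : ℝ → ℝ} (hxc : ContinuousOn x (Icc 0 T))
    {y : ℝ → ℝ} (hym : Measurable y) {C : ℝ} (hyC : ∀ u ∈ Icc 0 T, |y u| ≤ C)
    (hy : ∀ t ∈ Icc 0 T, y t = x t + convIntegral μ f y t) : ContinuousOn y (Icc 0 T) := by
  obtain ⟨r, hr₀, hq₁⟩ := exists_setIntegral_exp_neg_mul_lt_one (μ := μ) (T := T)
  set q := ∫ s in Icc 0 T, Real.exp (-r * s) ∂μ
  have hq₀ : 0 ≤ q := setIntegral_nonneg measurableSet_Icc fun s _ => (Real.exp_pos _).le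
  set Φ : (ℝ → ℝ) → ℝ → ℝ := fun z => (Icc 0 T).indicator fun t => x t + convIntegral μ f z t
  have hΦ : ∀ n, Measurable (Φ^[n] 0) ∧ ContinuousOn (Φ^[n] 0) (Icc 0 T) := by
    intro n
    induction n with
    | zero => exact ⟨measurable_const, continuousOn_const⟩
    | succ n ih =>
      rw [Function.iterate_succ_apply']
      have hc := hxc.add (continuousOn_convIntegral (μ := μ) hfm hf1 hf2 hfl ih.1 ih.2)
      exact ⟨hc.measurable_indicator measurableSet_Icc, hc.congr fun t ht => indicator_of_mem ht _⟩
  have hest : ∀ n, ∀ t ∈ Icc 0 T, |y t - Φ^[n] 0 t| ≤ q ^ n * C * Real.exp (r * t) := by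
    intro n
    induction n with
    | zero =>
      intro t ht
      simpa using (hyC t ht).trans (le_mul_of_one_le_right ((abs_nonneg _).trans (hyC t ht))
        (Real.one_le_exp (mul_nonneg hr₀ ht.1)))
    | succ n ih =>
      intro t ht
      obtain ⟨Cn, hCn⟩ := isCompact_Icc.exists_bound_of_continuousOn (hΦ n).2
      have hΦt : Φ (Φ^[n] 0) t = x t + convIntegral μ f (Φ^[n] 0) t := indicator_of_mem ht _
      rw [Function.iterate_succ_apply', hΦt, hy t ht, add_sub_add_left_eq_sub]
      calc _ ≤ q * (q ^ n * C * Real.exp (r * t)) :=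
            abs_convIntegral_sub_le hf2 ht (integrableOn_convIntegrand hfm hf1 hym hyC ht.2)
              (integrableOn_convIntegrand hfm hf1 (hΦ n).1 hCn ht.2) ih
        _ = q ^ (n + 1) * C * Real.exp (r * t) := by ring
  refine continuousOn_of_dist_le_mul_pow (fun n => (hΦ n).2) hq₀ hq₁
    (C := C * Real.exp (r * T)) fun n t ht => ?_
  calc dist (y t) (Φ^[n] 0 t) ≤ q ^ n * C * Real.exp (r * t) := hest n t ht
    _ ≤ q ^ n * C * Real.exp (r * T) := by
      gcongr
      · exact mul_nonneg (pow_nonneg hq₀ n) ((abs_nonneg _).trans (hyC t ht))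
      · exact ht.2
    _ = C * Real.exp (r * T) * q ^ n := by ring

theorem convolutionEquation_solution_continuous_general
    (B : StieltjesFunction ℝ) (hB : IsNNDistFun B)
    (T : ℝ)
    (hBcont : ContinuousOn (fun u => B u) (Set.Icc (0 : ℝ) T)) (hBzero : B 0 = 0)
    (x : ℝ → ℝ)
    (hxc : ContinuousOn x (Set.Icc (0 : ℝ) T))
    (f : ℝ → ℝ → ℝ) (hfm : Measurable (Function.uncurry f))
    (hf1 : ∀ (y t : ℝ), 0 ≤ t → |f y t| ≤ |y|)
    (hf2 : ∀ (y₁ y₂ t : ℝ), 0 ≤ t → |f y₁ t - f y₂ t| ≤ |y₁ - y₂|)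
    (hfl : ∀ y : ℝ, HasOneSidedLimitsNonneg (fun t => f y t))
    (y : ℝ → ℝ) (hy : SolvesConv B T x f y) :
    ContinuousOn y (Set.Icc (0 : ℝ) T) := by
  obtain ⟨hym, ⟨C, hyC⟩, hsol⟩ := hy
  have hB₀ : ContinuousWithinAt B (Iio 0) 0 :=
    continuousWithinAt_const.congr (fun v hv => hB.1 v hv) hBzero
  have : NullSingletonClass (B.measure.restrict (Icc 0 T)) :=
    nullSingletonClass_restrict fun a ha => B.measure_singleton_eq_zero <| by
      rcases ha.1.eq_or_lt with rfl | ha₀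
      · exact hB₀
      · exact (hBcont a ha).mono_of_mem_nhdsWithin (Icc_mem_nhdsLT_of_mem ⟨ha₀, ha.2⟩)
  set Y : ℝ → ℝ := fun u => if hu : u ∈ Icc 0 T then y u else 0
  have hYy : EqOn Y y (Icc 0 T) := fun u hu => dif_pos hu
  refine (continuousOn_of_eq_add_convIntegral (μ := B.measure) (y := Y) hfm hf1 hf2 hfl hxc
    (Measurable.dite hym measurable_const measurableSet_Icc) (C := C)
    (fun u hu => (congrArg abs (hYy hu)).trans_le (hyC u hu)) fun t ht => ?_).congr hYy.symm
  rw [hYy ht, convIntegral_congr hYy ht.2]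
  exact hsol t ht

/-- If `x` is continuous, `f(y, ·)` admits one-sided limits for every `y`, and `B` is
continuous on `[0,T]` with `B(0) = 0`, then the unique bounded Borel solution of the
convolution equation is continuous (Lemma B.1, continuity part). -/
theorem convolutionEquation_solution_continuous
    (B : StieltjesFunction ℝ) (hB : IsNNDistFun B) (hB0 : B 0 < 1)
    (T : ℝ) (hT : 0 < T)
    (hBcont : ContinuousOn (fun u => B u) (Set.Icc (0 : ℝ) T)) (hBzero : B 0 = 0)
    (x : ℝ → ℝ) (hxm : Measurable (fun t : Set.Icc (0 : ℝ) T => x t))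
    (hxb : ∃ C : ℝ, ∀ t ∈ Set.Icc (0 : ℝ) T, |x t| ≤ C)
    (hxc : ContinuousOn x (Set.Icc (0 : ℝ) T))
    (f : ℝ → ℝ → ℝ) (hfm : Measurable (Function.uncurry f))
    (hf1 : ∀ (y t : ℝ), 0 ≤ t → |f y t| ≤ |y|)
    (hf2 : ∀ (y₁ y₂ t : ℝ), 0 ≤ t → |f y₁ t - f y₂ t| ≤ |y₁ - y₂|)
    (hfl : ∀ y : ℝ, HasOneSidedLimitsNonneg (fun t => f y t))
    (y : ℝ → ℝ) (hy : SolvesConv B T x f y) :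
    ContinuousOn y (Set.Icc (0 : ℝ) T) :=
  convolutionEquation_solution_continuous_general B hB T hBcont hBzero x hxc f hfm hf1 hf2 hfl y hy
end
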